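/- arXiv:1912.06437 — 7 statements merged into one kernel-verified Lean document; each statement's English description precedes it below -/
import Mathlib

section
/- Let ∂ be an M-differential on V = E^N with ordered basis a_1,...,a_N. Then there exists an upper-triangular automorphism g of V (preserving each span{a_1,...,a_i}) such that ∂' = g∂g⁻¹ is elementary, i.e., for each basis vector a, either ∂'(a) = 0 or ∂'(a) = b for some basis vector b, and moreover ∂'(x) = ∂'(y) = z with x,y,z basis vectors implies x = y. -/
open Submodule Module

/-- Span of the first `k` standard basis vectors `a_1, ..., a_k` of `Fin N → E`. -/
noncomputable def Vspan (E : Type*) [Field E] (N k : ℕ) : Submodule E (Fin N → E) :=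
  Submodule.span E {v : Fin N → E | ∃ i : Fin N, (i : ℕ) < k ∧ v = Pi.single i 1}

/-- An M-differential: `d ∘ d = 0` and `d` maps `span{a_1,...,a_k}` into
`span{a_1,...,a_{k-1}}` for every `k`. -/
def IsMDiff {E : Type*} [Field E] {N : ℕ} (d : (Fin N → E) →ₗ[E] (Fin N → E)) : Prop :=
  d ∘ₗ d = 0 ∧ ∀ k : ℕ, Submodule.map d (Vspan E N k) ≤ Vspan E N (k - 1)

/-- An upper-triangular automorphism: an invertible linear map preserving every
subspace `span{a_1,...,a_k}`. -/
def IsUT {E : Type*} [Field E] {N : ℕ} (g : (Fin N → E) ≃ₗ[E] (Fin N → E)) : Prop :=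
  ∀ k : ℕ, Submodule.map g.toLinearMap (Vspan E N k) = Vspan E N k

/-- An elementary differential: each basis vector is sent to `0` or to a basis vector,
and no two distinct basis vectors have the same basis-vector image. -/
def IsElem {E : Type*} [Field E] {N : ℕ} (d : (Fin N → E) →ₗ[E] (Fin N → E)) : Prop :=
  (∀ i : Fin N, d (Pi.single i 1) = 0 ∨ ∃ j : Fin N, d (Pi.single i 1) = Pi.single j 1) ∧
  ∀ i i' j : Fin N, d (Pi.single i 1) = Pi.single j 1 →
    d (Pi.single i' 1) = Pi.single j 1 → i = i'

/-!
Work with a basis `b` adapted to the flag, i.e. one whose first `k` vectors span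
`span{a_1, ..., a_k}` for every `k`, and make it elementary one vector at a time. Once the first
`i₀` vectors are elementary, `d (b i₀)` is a combination of earlier vectors. Because `d² = 0`
it has no component along a vector with nonzero boundary; the components along boundaries
`d (b i)` are removed by subtracting the corresponding `b i` from `b i₀`; what is left is a
combination `v` of unpaired cycles. If `v = 0`, the new `b i₀` is a cycle. Otherwise `v`,
normalised at its last unpaired vector `b j`, replaces `b j`, which keeps the flag, and `b i₀`
becomes a preimage of it. The change of basis from `b` to the standard basis is the required
upper-triangular `g`.
-/

open Function

section FlagSpan

variable {K M M' : Type*} {N : ℕ}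

noncomputable def flagSpan (K : Type*) [Semiring K] [AddCommMonoid M] [Module K M]
    (b : Fin N → M) (k : ℕ) : Submodule K M :=
  span K (b '' {j | (j : ℕ) < k})

section Semiring

variable [Semiring K] [AddCommMonoid M] [Module K M] {b b' : Fin N → M} {k : ℕ}

theorem mem_flagSpan {j : Fin N} (hj : (j : ℕ) < k) : b j ∈ flagSpan K b k :=
  subset_span ⟨j, hj, rfl⟩

theorem flagSpan_mono {k l : ℕ} (h : k ≤ l) : flagSpan K b k ≤ flagSpan K b l :=
  span_mono (Set.image_mono fun _ hj => lt_of_lt_of_le hj h)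

theorem flagSpan_le_iff {p : Submodule K M} :
    flagSpan K b k ≤ p ↔ ∀ j : Fin N, (j : ℕ) < k → b j ∈ p := by
  simp [flagSpan, span_le, Set.subset_def]

theorem flagSpan_congr (h : ∀ j : Fin N, (j : ℕ) < k → b j = b' j) :
    flagSpan K b k = flagSpan K b' k :=
  congrArg (span K) (Set.image_congr fun j hj => h j hj)

theorem flagSpan_eq_span_range : flagSpan K b N = span K (Set.range b) := by
  rw [flagSpan, ← Set.image_univ]
  congr
  ext j
  simp

theorem map_flagSpan [AddCommMonoid M'] [Module K M'] (f : M →ₗ[K] M') (k : ℕ) :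
    map f (flagSpan K b k) = flagSpan K (f ∘ b) k := by
  rw [flagSpan, flagSpan, map_span, Set.image_comp]

end Semiring

section DivisionRing

variable [DivisionRing K] [AddCommGroup M] [Module K M] {b : Fin N → M}

theorem flagSpan_update_le {i : Fin N} {x : M} {u : K} (hx : x - u • b i ∈ flagSpan K b i)
    (k : ℕ) : flagSpan K (update b i x) k ≤ flagSpan K b k := by
  rw [flagSpan_le_iff]
  intro j hj
  rcases eq_or_ne j i with rfl | hji
  · rw [update_self, ← sub_add_cancel x (u • b j)]
    exact add_mem (flagSpan_mono hj.le hx) (smul_mem _ u (mem_flagSpan hj))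
  · rw [update_of_ne hji]
    exact mem_flagSpan hj

theorem flagSpan_update {i : Fin N} {x : M} {u : K} (hu : u ≠ 0)
    (hx : x - u • b i ∈ flagSpan K b i) (k : ℕ) :
    flagSpan K (update b i x) k = flagSpan K b k := by
  refine le_antisymm (flagSpan_update_le hx k) ?_
  have below : flagSpan K (update b i x) i = flagSpan K b i :=
    flagSpan_congr fun j hj => update_of_ne (Fin.ne_of_lt hj) _ _
  have hb : b i - u⁻¹ • update b i x i ∈ flagSpan K (update b i x) i := by
    rw [below, update_self, ← neg_mem_iff, neg_sub, ← inv_smul_smul₀ hu (b i), ← smul_sub]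
    exact smul_mem _ _ hx
  simpa using flagSpan_update_le hb k

theorem exists_smul_sub_mem_flagSpan {S : Set (Fin N)} {v : M} (hv : v ∈ span K (b '' S))
    (hv0 : v ≠ 0) : ∃ j ∈ S, ∃ c : K, c ≠ 0 ∧ c • v - b j ∈ flagSpan K b j := by
  obtain ⟨l, hlS, rfl⟩ := (Finsupp.mem_span_image_iff_linearCombination K).1 hv
  have hl : l.support.Nonempty :=
    Finsupp.support_nonempty_iff.2 fun h => hv0 (by rw [h, map_zero])
  set j := l.support.max' hl
  have hj : j ∈ l.support := l.support.max'_mem hl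
  have hlj : l j ≠ 0 := Finsupp.mem_support_iff.1 hj
  refine ⟨j, hlS hj, (l j)⁻¹, inv_ne_zero hlj, ?_⟩
  rw [Finsupp.linearCombination_apply, Finsupp.sum, ← Finset.add_sum_erase _ _ hj, smul_add,
    smul_smul, inv_mul_cancel₀ hlj, one_smul, add_sub_cancel_left]
  refine smul_mem _ _ (sum_mem fun i hi => smul_mem _ _ (mem_flagSpan ?_))
  exact lt_of_le_of_ne (l.support.le_max' i (Finset.mem_of_mem_erase hi))
    (Fin.val_ne_of_ne (Finset.ne_of_mem_erase hi))

end DivisionRing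

end FlagSpan

section ElemUpTo

variable {K M : Type*} [Semiring K] [AddCommMonoid M] [Module K M] {N : ℕ}

def IsElemUpTo (d : M →ₗ[K] M) (b : Fin N → M) (n : ℕ) : Prop :=
  (∀ i : Fin N, (i : ℕ) < n → d (b i) = 0 ∨ ∃ j < i, d (b i) = b j) ∧
  ∀ i i' : Fin N, (i : ℕ) < n → (i' : ℕ) < n → d (b i) ≠ 0 → d (b i) = d (b i') →
    i = i'

def IsUnpaired (d : M →ₗ[K] M) (b : Fin N → M) (n : ℕ) (j : Fin N) : Prop :=
  (j : ℕ) < n ∧ d (b j) = 0 ∧ ∀ i : Fin N, (i : ℕ) < n → d (b i) ≠ b j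

variable {d : M →ₗ[K] M} {b b' : Fin N → M} {n : ℕ}

theorem IsElemUpTo.congr (h : IsElemUpTo d b n)
    (hbb' : ∀ i : Fin N, (i : ℕ) < n → b' i = b i) : IsElemUpTo d b' n := by
  refine ⟨fun i hi => ?_, fun i i' hi hi' => ?_⟩
  · rw [hbb' i hi]
    refine (h.1 i hi).imp_right fun ⟨j, hji, hdj⟩ => ⟨j, hji, ?_⟩
    rw [hdj, hbb' j (lt_trans hji hi)]
  · rw [hbb' i hi, hbb' i' hi']
    exact h.2 i i' hi hi'

theorem IsUnpaired.congr {j : Fin N} (h : IsUnpaired d b n j)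
    (hbb' : ∀ i : Fin N, (i : ℕ) < n → b' i = b i) : IsUnpaired d b' n j := by
  obtain ⟨hj, hdj, hne⟩ := h
  refine ⟨hj, by rwa [hbb' j hj], fun i hi => ?_⟩
  rw [hbb' i hi, hbb' j hj]
  exact hne i hi

theorem IsUnpaired.ne {j k : Fin N} (h : IsUnpaired d b n j) {i : Fin N} (hi : (i : ℕ) < n)
    (hk : d (b i) = b k) : k ≠ j := by
  rintro rfl
  exact h.2.2 i hi hk

theorem IsElemUpTo.succ {i₀ : Fin N} (h : IsElemUpTo d b i₀)
    (hi₀ : d (b i₀) = 0 ∨ ∃ j, IsUnpaired d b i₀ j ∧ d (b i₀) = b j) :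
    IsElemUpTo d b (i₀ + 1) := by
  have lt_or_eq {i : Fin N} (hi : (i : ℕ) < i₀ + 1) : (i : ℕ) < i₀ ∨ i = i₀ :=
    (Nat.lt_succ_iff_lt_or_eq.1 hi).imp_right Fin.ext
  have hnew {i : Fin N} (hi : (i : ℕ) < i₀) (hne : d (b i₀) ≠ 0) :
      d (b i₀) ≠ d (b i) := by
    obtain ⟨j, hj, hdj⟩ := hi₀.resolve_left hne
    rw [hdj]
    exact (hj.2.2 i hi).symm
  refine ⟨fun i hi => ?_, fun i i' hi hi' hne hii' => ?_⟩
  · rcases lt_or_eq hi with hi | rfl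
    · exact h.1 i hi
    · exact hi₀.imp_right fun ⟨j, hj, hdj⟩ => ⟨j, hj.1, hdj⟩
  · rcases lt_or_eq hi with hi | rfl <;> rcases lt_or_eq hi' with hi' | rfl
    · exact h.2 i i' hi hi' hne hii'
    · exact absurd hii'.symm (hnew hi (hii' ▸ hne))
    · exact absurd hii' (hnew hi' hne)
    · rfl

theorem IsElemUpTo.update_unpaired [Nontrivial K] {j : Fin N} {v : M} (h : IsElemUpTo d b n)
    (hj : IsUnpaired d b n j) (hv : d v = 0) (hli : LinearIndependent K (update b j v)) :
    IsElemUpTo d (update b j v) n ∧ IsUnpaired d (update b j v) n j := by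
  have hd_update {i : Fin N} (hi : (i : ℕ) < n) :
      d (update b j v i) = 0 ∨ ∃ k < i, k ≠ j ∧ d (update b j v i) = update b j v k := by
    rcases eq_or_ne i j with rfl | hij
    · exact Or.inl (by rwa [update_self])
    rw [update_of_ne hij]
    refine (h.1 i hi).imp_right fun ⟨k, hki, hdk⟩ => ⟨k, hki, hj.ne hi hdk, ?_⟩
    rw [hdk, update_of_ne (hj.ne hi hdk)]
  refine ⟨⟨fun i hi => (hd_update hi).imp_right fun ⟨k, hki, _, hdk⟩ => ⟨k, hki, hdk⟩,
    fun i i' hi hi' hne hii' => ?_⟩, ⟨hj.1, by rwa [update_self], fun i hi hdi => ?_⟩⟩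
  · have hne_j {i : Fin N} (hi : d (update b j v i) ≠ 0) : i ≠ j := by
      rintro rfl
      exact hi (by rwa [update_self])
    have hij := hne_j hne
    have hi'j := hne_j (hii' ▸ hne)
    rw [update_of_ne hij] at hne hii'
    rw [update_of_ne hi'j] at hii'
    exact h.2 i i' hi hi' hne hii'
  · rcases hd_update hi with h0 | ⟨k, -, hkj, hdk⟩
    · exact hli.ne_zero j (hdi ▸ h0)
    · exact hkj (hli.injective (hdk.symm.trans hdi))

end ElemUpTo

section Flag

variable {E : Type*} [Field E] {N : ℕ}

theorem Vspan_eq_flagSpan (k : ℕ) : Vspan E N k = flagSpan E (Pi.basisFun E (Fin N)) k := by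
  rw [Vspan, flagSpan]
  congr
  ext v
  simp [eq_comm]

def IsFlagBasis (b : Fin N → Fin N → E) : Prop :=
  ∀ k, flagSpan E b k = Vspan E N k

theorem isFlagBasis_basisFun : IsFlagBasis (Pi.basisFun E (Fin N)) :=
  fun k => (Vspan_eq_flagSpan k).symm

namespace IsFlagBasis

variable {b b' : Fin N → Fin N → E}

theorem span_range (hb : IsFlagBasis b) : span E (Set.range b) = ⊤ := by
  rw [← flagSpan_eq_span_range, hb, Vspan_eq_flagSpan, flagSpan_eq_span_range,
    Basis.span_eq]

noncomputable def basis (hb : IsFlagBasis b) : Basis (Fin N) E (Fin N → E) :=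
  basisOfTopLeSpanOfCardEqFinrank b hb.span_range.ge (by simp)

theorem coe_basis (hb : IsFlagBasis b) : ⇑hb.basis = b :=
  coe_basisOfTopLeSpanOfCardEqFinrank _ _ _

theorem linearIndependent (hb : IsFlagBasis b) : LinearIndependent E b :=
  hb.coe_basis ▸ hb.basis.linearIndependent

theorem mem_span_image (hb : IsFlagBasis b) {x : Fin N → E} {s : Set (Fin N)} :
    x ∈ span E (b '' s) ↔ ↑(hb.basis.repr x).support ⊆ s := by
  rw [← hb.basis.mem_span_image, hb.coe_basis]

theorem flagSpan_eq (hb : IsFlagBasis b) (hb' : IsFlagBasis b') (k : ℕ) :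
    flagSpan E b k = flagSpan E b' k :=
  (hb k).trans (hb' k).symm

theorem update (hb : IsFlagBasis b) {i : Fin N} {x : Fin N → E} {u : E} (hu : u ≠ 0)
    (hx : x - u • b i ∈ flagSpan E b i) : IsFlagBasis (update b i x) :=
  fun k => (flagSpan_update hu hx k).trans (hb k)

theorem apply_mem_flagSpan (hb : IsFlagBasis b) {d : (Fin N → E) →ₗ[E] (Fin N → E)}
    (hd : IsMDiff d) (i : Fin N) : d (b i) ∈ flagSpan E b i := by
  have hi : b i ∈ Vspan E N (i + 1) := hb (i + 1) ▸ mem_flagSpan (Nat.lt_succ_self i)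
  rw [hb]
  simpa using hd.2 (i + 1) (mem_map_of_mem hi)

theorem basis_equiv_basisFun_apply (hb : IsFlagBasis b) (j : Fin N) :
    hb.basis.equiv (Pi.basisFun E (Fin N)) (Equiv.refl _) (b j) = Pi.single j 1 := by
  rw [← congrFun hb.coe_basis j]
  simp

theorem isUT (hb : IsFlagBasis b) :
    IsUT (hb.basis.equiv (Pi.basisFun E (Fin N)) (Equiv.refl _)) := by
  intro k
  conv_lhs => rw [← hb k]
  rw [Vspan_eq_flagSpan, map_flagSpan]
  congr 1
  ext1 j
  rw [comp_apply, Pi.basisFun_apply]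
  exact hb.basis_equiv_basisFun_apply j

end IsFlagBasis

end Flag

section Reduction

variable {E : Type*} [Field E] {N : ℕ} {d : (Fin N → E) →ₗ[E] (Fin N → E)}
  {b : Fin N → Fin N → E}

theorem IsMDiff.apply_apply (hd : IsMDiff d) (x : Fin N → E) : d (d x) = 0 :=
  LinearMap.congr_fun hd.1 x

/-- If `d (b j) = b k`, the functionals `coord j` and `coord k ∘ d` agree on the first `i₀`
basis vectors, and `coord k ∘ d` kills `d (b i₀)` because `d² = 0`. -/
theorem IsElemUpTo.coord_apply_eq_zero (hd : IsMDiff d) (hb : IsFlagBasis b) {i₀ j : Fin N}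
    (h : IsElemUpTo d b i₀) (hj : (j : ℕ) < i₀) (hdj : d (b j) ≠ 0) :
    hb.basis.coord j (d (b i₀)) = 0 := by
  obtain ⟨k, -, hk⟩ := (h.1 j hj).resolve_left hdj
  have hB (i : Fin N) : b i = hb.basis i := (congrFun hb.coe_basis i).symm
  have hcoord :
      Set.EqOn (hb.basis.coord j) (hb.basis.coord k ∘ₗ d) (b '' {j' | (j' : ℕ) < i₀}) := by
    rintro _ ⟨j', hj', rfl⟩
    simp only [LinearMap.comp_apply, Basis.coord_apply, hB j', Basis.repr_self,
      Finsupp.single_apply]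
    rcases h.1 j' hj' with h0 | ⟨k', -, hk'⟩
    · rw [← hB j', h0, map_zero, Finsupp.zero_apply, if_neg]
      rintro rfl
      exact hdj h0
    · rw [← hB j', hk', hB k', Basis.repr_self, Finsupp.single_apply]
      refine if_congr ⟨?_, ?_⟩ rfl rfl
      · rintro rfl
        exact hb.linearIndependent.injective (hk'.symm.trans hk)
      · rintro rfl
        exact h.2 j' j hj' hj (hk' ▸ hk ▸ hdj) (hk'.trans hk.symm)
  rw [LinearMap.eqOn_span hcoord (hb.apply_mem_flagSpan hd i₀), LinearMap.comp_apply,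
    hd.apply_apply, map_zero]

theorem IsElemUpTo.exists_sub_mem_span_unpaired (hd : IsMDiff d) (hb : IsFlagBasis b)
    {i₀ : Fin N} (h : IsElemUpTo d b i₀) :
    ∃ w ∈ flagSpan E b i₀, d (b i₀ - w) ∈ span E (b '' {j | IsUnpaired d b i₀ j}) := by
  set A := {j : Fin N | ∃ i : Fin N, (i : ℕ) < i₀ ∧ d (b i) = b j}
  have hsupp : d (b i₀) ∈ span E (b '' (A ∪ {j | IsUnpaired d b i₀ j})) := by
    have hlt := hb.apply_mem_flagSpan hd i₀
    rw [flagSpan, hb.mem_span_image] at hlt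
    rw [hb.mem_span_image]
    intro j hj
    have hdj : d (b j) = 0 := by
      by_contra hdj
      exact Finsupp.mem_support_iff.1 hj (h.coord_apply_eq_zero hd hb (hlt hj) hdj)
    by_cases hA : j ∈ A
    · exact Or.inl hA
    · exact Or.inr ⟨hlt hj, hdj, fun i hi hdi => hA ⟨i, hi, hdi⟩⟩
  have hA : span E (b '' A) ≤ map d (flagSpan E b i₀) := by
    rw [span_le]
    rintro _ ⟨j, ⟨i, hi, hij⟩, rfl⟩
    exact ⟨b i, mem_flagSpan hi, hij⟩
  rw [Set.image_union, span_union, mem_sup] at hsupp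
  obtain ⟨y, hy, z, hz, hyz⟩ := hsupp
  obtain ⟨w, hw, rfl⟩ := hA hy
  exact ⟨w, hw, by rwa [map_sub, ← hyz, add_sub_cancel_left]⟩

theorem IsElemUpTo.exists_succ (hd : IsMDiff d) (hb : IsFlagBasis b) {i₀ : Fin N}
    (h : IsElemUpTo d b i₀) : ∃ b', IsFlagBasis b' ∧ IsElemUpTo d b' (i₀ + 1) := by
  have below {x : Fin N → E} {b' : Fin N → Fin N → E} (i : Fin N) (hi : (i : ℕ) < i₀) :
      update b' i₀ x i = b' i :=
    update_of_ne (Fin.ne_of_lt hi) _ _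
  obtain ⟨w, hw, hv⟩ := h.exists_sub_mem_span_unpaired hd hb
  by_cases hv0 : d (b i₀ - w) = 0
  · refine ⟨update b i₀ (b i₀ - w), hb.update one_ne_zero (by simpa using hw), ?_⟩
    exact (h.congr below).succ (Or.inl (by rwa [update_self]))
  obtain ⟨j, hj, c, hc, hcj⟩ := exists_smul_sub_mem_flagSpan hv hv0
  set b₁ := update b j (c • d (b i₀ - w))
  have hb₁ : IsFlagBasis b₁ := hb.update one_ne_zero (by rwa [one_smul])
  obtain ⟨h₁, hj₁⟩ := h.update_unpaired hj (by rw [map_smul, hd.apply_apply, smul_zero])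
    hb₁.linearIndependent
  have hb₁i₀ : b₁ i₀ = b i₀ := update_of_ne (Fin.ne_of_lt hj.1).symm _ _
  refine ⟨update b₁ i₀ (c • (b i₀ - w)), hb₁.update hc ?_, ?_⟩
  · rw [hb₁i₀, smul_sub, sub_sub_cancel_left, hb₁.flagSpan_eq hb]
    exact neg_mem (smul_mem _ c hw)
  refine (h₁.congr below).succ (Or.inr ⟨j, hj₁.congr below, ?_⟩)
  rw [update_self, below j hj.1, map_smul, update_self]

theorem exists_isFlagBasis_isElemUpTo (hd : IsMDiff d) :
    ∀ n ≤ N, ∃ b, IsFlagBasis b ∧ IsElemUpTo d b n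
  | 0, _ => ⟨_, isFlagBasis_basisFun, fun _ hi => absurd hi (Nat.not_lt_zero _),
      fun _ _ hi => absurd hi (Nat.not_lt_zero _)⟩
  | n + 1, hn => by
    obtain ⟨b, hb, h⟩ := exists_isFlagBasis_isElemUpTo hd n (Nat.le_of_succ_le hn)
    exact h.exists_succ (i₀ := ⟨n, hn⟩) hd hb

theorem isElem_conj_of_isElemUpTo (g : (Fin N → E) ≃ₗ[E] (Fin N → E))
    (hg : ∀ j, g (b j) = Pi.single j 1)
    (h : IsElemUpTo d b N) : IsElem (g.toLinearMap ∘ₗ d ∘ₗ g.symm.toLinearMap) := by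
  have hconj (i : Fin N) :
      (g.toLinearMap ∘ₗ d ∘ₗ g.symm.toLinearMap) (Pi.single i 1) = g (d (b i)) := by
    simp [← hg i]
  refine ⟨fun i => ?_, fun i i' j hi hi' => ?_⟩
  · rw [hconj]
    rcases h.1 i i.isLt with h0 | ⟨j, -, hj⟩
    · exact Or.inl (by rw [h0, map_zero])
    · exact Or.inr ⟨j, by rw [hj, hg]⟩
  · rw [hconj, ← hg j, g.injective.eq_iff] at hi hi'
    have hbj : b j ≠ 0 := fun h0 => by simpa [h0, eq_comm] using hg j
    exact h.2 i i' i.isLt i'.isLt (hi ▸ hbj) (hi.trans hi'.symm)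

end Reduction

theorem stmt1 {E : Type*} [Field E] {N : ℕ} (d : (Fin N → E) →ₗ[E] (Fin N → E))
    (hd : IsMDiff d) :
    ∃ g : (Fin N → E) ≃ₗ[E] (Fin N → E), IsUT g ∧
      IsElem (g.toLinearMap ∘ₗ d ∘ₗ g.symm.toLinearMap) := by
  obtain ⟨b, hb, h⟩ := exists_isFlagBasis_isElemUpTo hd N le_rfl
  exact ⟨_, hb.isUT, isElem_conj_of_isElemUpTo _ hb.basis_equiv_basisFun_apply h⟩
end

section
/- Let ∂ and ∂' be two elementary M-differentials on V = E^N with the same ordered basis a_1,...,a_N that are conjugate by an upper-triangular automorphism. Then ∂ = ∂' as linear maps, i.e., for all indices i, j one has ∂(a_i) = a_j if and only if ∂'(a_i) = a_j. -/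
open Submodule Module

section Aux

variable {E : Type*} [Field E] {N : ℕ}

private lemma bInj : Function.Injective (fun i : Fin N => (Pi.single i 1 : Fin N → E)) := by
  intro i j h
  by_contra hne
  have := congrFun h i
  simp [Pi.single_apply, Ne.symm hne] at this

private lemma bLI : LinearIndependent E (fun i : Fin N => (Pi.single i 1 : Fin N → E)) := by
  have := (Pi.basisFun E (Fin N)).linearIndependent
  convert this using 1
  funext i
  simp [Pi.basisFun_apply]

private lemma rank_span_image (A : Set (Fin N)) :
    finrank E (span E ((fun i : Fin N => (Pi.single i 1 : Fin N → E)) '' A)) = A.ncard := by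
  classical
  haveI : Fintype A := (Set.toFinite A).fintype
  have hli : LinearIndependent E (fun x : A => (Pi.single (x : Fin N) 1 : Fin N → E)) :=
    bLI.comp ((↑) : A → Fin N) Subtype.val_injective
  rw [Set.image_eq_range, finrank_span_eq_card hli, ← Nat.card_eq_fintype_card,
    Nat.card_coe_set_eq]

private lemma vspan_eq (k : ℕ) :
    Vspan E N k = span E ((fun i : Fin N => (Pi.single i 1 : Fin N → E)) ''
      {i : Fin N | (i : ℕ) < k}) := by
  unfold Vspan
  congr 1
  ext v
  simp only [Set.mem_setOf_eq, Set.mem_image]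
  constructor
  · rintro ⟨i, hi, rfl⟩; exact ⟨i, hi, rfl⟩
  · rintro ⟨i, hi, rfl⟩; exact ⟨i, hi, rfl⟩

/-- Target set of the elementary differential restricted to the first `k` basis vectors. -/
private def Tset (d : (Fin N → E) →ₗ[E] (Fin N → E)) (k : ℕ) : Set (Fin N) :=
  {j : Fin N | ∃ i : Fin N, (i : ℕ) < k ∧ d (Pi.single i 1) = Pi.single j 1}

private lemma map_vspan {d : (Fin N → E) →ₗ[E] (Fin N → E)} (he : IsElem d) (k : ℕ) :
    Submodule.map d (Vspan E N k) =
      span E ((fun j : Fin N => (Pi.single j 1 : Fin N → E)) '' Tset d k) := by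
  rw [vspan_eq, Submodule.map_span]
  apply le_antisymm
  · rw [span_le]
    rintro v ⟨w, ⟨i, hi, rfl⟩, rfl⟩
    rcases he.1 i with h0 | ⟨j, hj⟩
    · simp only [h0]; exact zero_mem _
    · simp only [hj]; exact subset_span ⟨j, ⟨i, hi, hj⟩, rfl⟩
  · rw [span_le]
    rintro v ⟨j, ⟨i, hi, hij⟩, rfl⟩
    exact subset_span ⟨Pi.single i 1, ⟨i, hi, rfl⟩, hij⟩

end Aux

theorem stmt2 {E : Type*} [Field E] {N : ℕ}
    (d d' : (Fin N → E) →ₗ[E] (Fin N → E))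
    (hd : IsMDiff d) (hd' : IsMDiff d') (he : IsElem d) (he' : IsElem d')
    (g : (Fin N → E) ≃ₗ[E] (Fin N → E)) (hg : IsUT g)
    (hconj : d' = g.toLinearMap ∘ₗ d ∘ₗ g.symm.toLinearMap) :
    d = d' := by
  classical
  -- g.symm also preserves the filtration
  have hgsymm : ∀ k, Submodule.map g.symm.toLinearMap (Vspan E N k) = Vspan E N k := by
    intro k
    conv_lhs => rw [← hg k]
    rw [← Submodule.map_comp]
    simp
  -- dimension counts agree
  have hcard : ∀ k l : ℕ,
      (Tset d k ∪ {i : Fin N | (i : ℕ) < l}).ncard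
        = (Tset d' k ∪ {i : Fin N | (i : ℕ) < l}).ncard := by
    intro k l
    have h1 : Submodule.map d' (Vspan E N k) ⊔ Vspan E N l
        = Submodule.map g.toLinearMap (Submodule.map d (Vspan E N k) ⊔ Vspan E N l) := by
      rw [Submodule.map_sup, hg l, hconj, Submodule.map_comp, Submodule.map_comp, hgsymm k]
    have h2 : finrank E ((Submodule.map d (Vspan E N k) ⊔ Vspan E N l : Submodule E (Fin N → E)))
        = finrank E ((Submodule.map d' (Vspan E N k) ⊔ Vspan E N l : Submodule E (Fin N → E))) := by
      rw [h1, LinearEquiv.finrank_map_eq]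
    rw [map_vspan he, map_vspan he', vspan_eq l, ← Submodule.span_union,
      ← Submodule.span_union, ← Set.image_union, ← Set.image_union,
      rank_span_image, rank_span_image] at h2
    exact h2
  -- membership in target sets agrees
  have hT : ∀ k (j : Fin N), j ∈ Tset d k ↔ j ∈ Tset d' k := by
    intro k j
    have key : ∀ (T : Set (Fin N)),
        (T ∪ {i : Fin N | (i : ℕ) < (j : ℕ) + 1}).ncard
          = (T ∪ {i : Fin N | (i : ℕ) < (j : ℕ)}).ncard + (if j ∈ T then 0 else 1) := by
      intro T
      have hins : T ∪ {i : Fin N | (i : ℕ) < (j : ℕ) + 1}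
          = insert j (T ∪ {i : Fin N | (i : ℕ) < (j : ℕ)}) := by
        ext x
        simp only [Set.mem_union, Set.mem_setOf_eq, Set.mem_insert_iff]
        constructor
        · rintro (hx | hx)
          · exact Or.inr (Or.inl hx)
          · rcases Nat.lt_succ_iff_lt_or_eq.mp hx with h | h
            · exact Or.inr (Or.inr h)
            · exact Or.inl (Fin.ext h)
        · rintro (rfl | hx | hx)
          · exact Or.inr (Nat.lt_succ_self _)
          · exact Or.inl hx
          · exact Or.inr (Nat.lt_succ_of_lt hx)
      rw [hins]
      by_cases hj : j ∈ T
      · rw [if_pos hj, Set.insert_eq_of_mem (Set.mem_union_left _ hj), add_zero]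
      · rw [if_neg hj, Set.ncard_insert_of_notMem (by simp [hj]) (Set.toFinite _)]
    have e1 := key (Tset d k)
    have e2 := key (Tset d' k)
    rw [hcard k ((j : ℕ) + 1), hcard k (j : ℕ)] at e1
    rw [e2] at e1
    have := Nat.add_left_cancel e1
    by_cases h1 : j ∈ Tset d k <;> by_cases h2 : j ∈ Tset d' k <;>
      simp [h1, h2] at this ⊢
  -- characterization of elementary arrows via target sets
  have hchar : ∀ (D : (Fin N → E) →ₗ[E] (Fin N → E)), IsElem D → ∀ i j : Fin N,
      D (Pi.single i 1) = Pi.single j 1 ↔ (j ∈ Tset D ((i : ℕ) + 1) ∧ j ∉ Tset D (i : ℕ)) := by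
    intro D hD i j
    constructor
    · intro h
      refine ⟨⟨i, Nat.lt_succ_self _, h⟩, ?_⟩
      rintro ⟨i', hi', h'⟩
      have heq : i' = i := hD.2 i' i j h' h
      subst heq
      exact lt_irrefl _ hi'
    · rintro ⟨⟨i', hi', h'⟩, hnot⟩
      have hvi : (i' : ℕ) = (i : ℕ) := by
        rcases Nat.lt_succ_iff_lt_or_eq.mp hi' with h | h
        · exact absurd ⟨i', h, h'⟩ hnot
        · exact h
      have heq : i' = i := Fin.ext hvi
      rwa [heq] at h'
  -- conclude equality on basis vectors
  have hbasis : ∀ i : Fin N, d (Pi.single i 1) = d' (Pi.single i 1) := by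
    intro i
    rcases he.1 i with h0 | ⟨j, hj⟩
    · rcases he'.1 i with h0' | ⟨j', hj'⟩
      · rw [h0, h0']
      · exfalso
        have hdis : d (Pi.single i 1) = Pi.single j' 1 := by
          rw [hchar d he, hT, hT]
          exact ((hchar d' he' i j').mp hj')
        rw [h0] at hdis
        have h01 : (0 : E) = 1 := by simpa using congrFun hdis j'
        exact zero_ne_one h01
    · have hdis : d' (Pi.single i 1) = Pi.single j 1 := by
        rw [hchar d' he', ← hT, ← hT]
        exact ((hchar d he i j).mp hj)
      rw [hj, hdis]
  apply Module.Basis.ext (Pi.basisFun E (Fin N))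
  intro i
  rw [Pi.basisFun_apply, hbasis i]
end

section
/- Let ∂ be a quasi-elementary M-differential on V = E(A) with basis A partitioned into B and A\B, with the induced partitions B = P ⊔ Q ⊔ R and A\B = X ⊔ Y ⊔ Z. Suppose q ∈ Q, r ∈ R, y ∈ Y, z ∈ Z satisfy ∂(q) = r and the component of ∂(y) in E(A\B) equals z. Then ⟨∂(y), q⟩ = −⟨∂(z), r⟩, where ⟨·,·⟩ is the standard inner product making A orthonormal. -/
open Submodule Module

/-- The M-pair setup with `d_B` and `d_{A\B}` elementary: `A = Fin N` is the ordered basis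
of `E(A) = Fin N → E`; `B ⊆ A` spans a `d`-invariant subspace `E(B)`;
`B = P ⊔ Q ⊔ R` with `d_B` vanishing on `P` and restricting to a bijection `Q → R`;
`A \ B = X ⊔ Y ⊔ Z` with the induced differential `d_{A\B}` (the components of `d`
outside `B`) vanishing on `X` and `Z` and restricting to a bijection `Y → Z`. -/
structure QESetup {E : Type*} [Field E] {N : ℕ}
    (d : (Fin N → E) →ₗ[E] (Fin N → E)) (B P Q R X Y Z : Set (Fin N)) : Prop where
  sq : d ∘ₗ d = 0
  lower : ∀ i j : Fin N, i ≤ j → d (Pi.single i 1) j = 0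
  hBunion : B = P ∪ Q ∪ R
  hPQ : Disjoint P Q
  hPR : Disjoint P R
  hQR : Disjoint Q R
  hCunion : Bᶜ = X ∪ Y ∪ Z
  hXY : Disjoint X Y
  hXZ : Disjoint X Z
  hYZ : Disjoint Y Z
  hBinv : ∀ b ∈ B, ∀ i ∉ B, d (Pi.single b 1) i = 0
  hP : ∀ p ∈ P, d (Pi.single p 1) = 0
  hQmap : ∀ q ∈ Q, ∃ r ∈ R, d (Pi.single q 1) = Pi.single r 1
  hRsurj : ∀ r ∈ R, ∃! q, q ∈ Q ∧ d (Pi.single q 1) = Pi.single r 1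
  hX : ∀ x ∈ X, ∀ i ∉ B, d (Pi.single x 1) i = 0
  hYmap : ∀ y ∈ Y, ∃ z ∈ Z, ∀ i ∉ B,
    d (Pi.single y 1) i = (Pi.single z 1 : Fin N → E) i
  hZsurj : ∀ z ∈ Z, ∃! y, y ∈ Y ∧ ∀ i ∉ B,
    d (Pi.single y 1) i = (Pi.single z 1 : Fin N → E) i
  hZ : ∀ z ∈ Z, ∀ i ∉ B, d (Pi.single z 1) i = 0

/-- The extra conditions making an M-differential quasi-elementary: for `x ∈ X` the
vector `d(x)` contains at most one element of `P`, with coefficient `1` if present, and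
each `p ∈ P` appears in `d(x)` for at most one `x ∈ X`. -/
def QEExtra {E : Type*} [Field E] {N : ℕ}
    (d : (Fin N → E) →ₗ[E] (Fin N → E)) (P X : Set (Fin N)) : Prop :=
  (∀ x ∈ X, ∀ p ∈ P, ∀ p' ∈ P,
      d (Pi.single x 1) p ≠ 0 → d (Pi.single x 1) p' ≠ 0 → p = p') ∧
  (∀ x ∈ X, ∀ p ∈ P, d (Pi.single x 1) p ≠ 0 → d (Pi.single x 1) p = 1) ∧
  (∀ p ∈ P, ∀ x ∈ X, ∀ x' ∈ X,
      d (Pi.single x 1) p ≠ 0 → d (Pi.single x' 1) p ≠ 0 → x = x')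

theorem stmt9 {E : Type*} [Field E] {N : ℕ}
    (d : (Fin N → E) →ₗ[E] (Fin N → E)) (B P Q R X Y Z : Set (Fin N))
    (hqe : QESetup d B P Q R X Y Z) (hextra : QEExtra d P X)
    (q r y z : Fin N) (hq : q ∈ Q) (hr : r ∈ R) (hy : y ∈ Y) (hz : z ∈ Z)
    (h1 : d (Pi.single q 1) = Pi.single r 1)
    (h2 : ∀ i ∉ B, d (Pi.single y 1) i = (Pi.single z 1 : Fin N → E) i) :
    d (Pi.single y 1) q = - d (Pi.single z 1) r := by
  obtain ⟨sq, lower, hBunion, hPQ, hPR, hQR, hCunion, hXY, hXZ, hYZ, hBinv, hP,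
    hQmap, hRsurj, hX, hYmap, hZsurj, hZ0⟩ := hqe
  have hdd : ∀ v : Fin N → E, d (d v) = 0 := fun v => by
    have := LinearMap.ext_iff.mp sq v
    simpa using this
  have hR0 : ∀ i ∈ R, d (Pi.single i 1) = (0 : Fin N → E) := by
    intro i hi
    obtain ⟨q', ⟨hq', hdq'⟩, _⟩ := hRsurj i hi
    rw [← hdq']; exact hdd _
  have hqB : q ∈ B := by rw [hBunion]; exact Or.inl (Or.inr hq)
  have hzB : z ∉ B := by
    have : z ∈ Bᶜ := by rw [hCunion]; exact Or.inr hz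
    exact this
  set w : Fin N → E := fun i => d (Pi.single y 1) i - (Pi.single z 1 : Fin N → E) i with hwdef
  have hw0 : ∀ i ∉ B, w i = 0 := fun i hi => by simp [hwdef, h2 i hi]
  have hdy : d (Pi.single y 1) = Pi.single z 1 + w := by
    funext i; simp [hwdef]
  have hweq : w = ∑ i : Fin N, w i • (Pi.single i 1 : Fin N → E) := by
    funext j
    rw [Finset.sum_apply]
    simp [Pi.single_apply, smul_eq_mul, mul_ite, mul_one, mul_zero]
  have hdwr : d w r = w q := by
    conv_lhs => rw [hweq, map_sum]
    have : ∀ i : Fin N, d (w i • (Pi.single i 1 : Fin N → E)) r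
        = w i * d (Pi.single i 1) r := fun i => by
      rw [map_smul]; rfl
    rw [Finset.sum_apply]
    rw [Finset.sum_congr rfl (fun i _ => this i)]
    rw [Finset.sum_eq_single q]
    · rw [h1, Pi.single_eq_same, mul_one]
    · intro i _ hiq
      by_cases hiB : i ∈ B
      · rw [hBunion] at hiB
        rcases hiB with (hiP | hiQ) | hiR
        · rw [hP i hiP]; simp
        · obtain ⟨r', hr', hdr'⟩ := hQmap i hiQ
          rw [hdr']
          have hne : r' ≠ r := by
            intro hrr
            apply hiq
            obtain ⟨q', hq'spec, huniq⟩ := hRsurj r hr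
            have h1' := huniq q ⟨hq, h1⟩
            have h2' := huniq i ⟨hiQ, by rw [hdr', hrr]⟩
            rw [h2', h1']
          rw [Pi.single_eq_of_ne hne.symm]; simp
        · rw [hR0 i hiR]; simp
      · rw [hw0 i hiB]; simp
    · intro h; exact absurd (Finset.mem_univ q) h
  have hkey : d (Pi.single z 1) r + d w r = 0 := by
    have h0 : d (d (Pi.single y 1)) = 0 := hdd _
    rw [hdy, map_add] at h0
    have := congrFun h0 r
    simpa using this
  have hwq : w q = d (Pi.single y 1) q := by
    have : q ≠ z := fun h => hzB (h ▸ hqB)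
    simp [hwdef, Pi.single_eq_of_ne this]
  rw [hdwr, hwq] at hkey
  linear_combination hkey
end

section
/- Let ∂ be a quasi-elementary M-differential on E(A) with B ⊆ A as above. Suppose y ∈ Y and z ∈ Z satisfy ∂_{A\B}(y) = z, and suppose b ∈ B appears with nonzero coefficient in ∂(z). Then b ∈ R, and the unique q ∈ Q with ∂(q) = b appears with nonzero coefficient in ∂(y). -/
open Submodule Module

theorem stmt10 {E : Type*} [Field E] {N : ℕ}
    (d : (Fin N → E) →ₗ[E] (Fin N → E)) (B P Q R X Y Z : Set (Fin N))
    (hqe : QESetup d B P Q R X Y Z) (hextra : QEExtra d P X)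
    (y z : Fin N) (hy : y ∈ Y) (hz : z ∈ Z)
    (h1 : ∀ i ∉ B, d (Pi.single y 1) i = (Pi.single z 1 : Fin N → E) i)
    (b : Fin N) (hb : b ∈ B) (hbz : d (Pi.single z 1) b ≠ 0) :
    b ∈ R ∧ ∃ q ∈ Q, d (Pi.single q 1) = Pi.single b 1 ∧ d (Pi.single y 1) q ≠ 0 := by
  classical
  set w : Fin N → E := d (Pi.single y 1) - Pi.single z 1 with hw
  have hwB : ∀ i ∉ B, w i = 0 := by
    intro i hi
    simp [hw, h1 i hi]
  have hzB : z ∉ B := by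
    have : z ∈ Bᶜ := by rw [hqe.hCunion]; exact Or.inr hz
    simpa using this
  have hddy : d (d (Pi.single y 1)) = 0 := by
    have := congrFun (congrArg DFunLike.coe hqe.sq) (Pi.single y 1)
    simpa using this
  have hdw : d w = - d (Pi.single z 1) := by
    simp [hw, map_sub, hddy]
  have hsum : w = ∑ i : Fin N, w i • (Pi.single i 1 : Fin N → E) := by
    funext j
    rw [Finset.sum_apply]
    simp [Pi.single_apply]
  have hne : (∑ i : Fin N, w i * d (Pi.single i 1) b) ≠ 0 := by
    have : d w b = ∑ i : Fin N, w i * d (Pi.single i 1) b := by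
      conv_lhs => rw [hsum]
      rw [map_sum, Finset.sum_apply]
      simp [smul_eq_mul]
    rw [← this, hdw]
    simpa using hbz
  obtain ⟨i, -, hi⟩ := Finset.exists_ne_zero_of_sum_ne_zero hne
  have hwi : w i ≠ 0 := fun h => hi (by simp [h])
  have hdi : d (Pi.single i 1) b ≠ 0 := fun h => hi (by simp [h])
  have hiB : i ∈ B := by
    by_contra h
    exact hwi (hwB i h)
  rw [hqe.hBunion] at hiB
  rcases hiB with (hiP | hiQ) | hiR
  · exact absurd (by simp [hqe.hP i hiP]) hdi
  · obtain ⟨r, hrR, hdr⟩ := hqe.hQmap i hiQ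
    have hbr : b = r := by
      by_contra h
      exact hdi (by simp [hdr, Pi.single_apply, h])
    have hbR : b ∈ R := hbr ▸ hrR
    refine ⟨hbR, i, hiQ, by rw [hdr, hbr], ?_⟩
    have hzi : (Pi.single z 1 : Fin N → E) i = 0 := by
      have : z ≠ i := fun h => hzB (h ▸ (by rw [hqe.hBunion]; exact Or.inl (Or.inr hiQ)))
      simp [Pi.single_apply, this.symm]
    have : d (Pi.single y 1) i = w i := by simp [hw, hzi]
    rw [this]; exact hwi
  · obtain ⟨q, ⟨hqQ, hdq⟩, -⟩ := hqe.hRsurj i hiR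
    have : d (Pi.single i 1) = 0 := by
      rw [← hdq]
      have := congrFun (congrArg DFunLike.coe hqe.sq) (Pi.single q 1)
      simpa using this
    exact absurd (by simp [this]) hdi
end

section
/- Let ∂ be an M-differential on E(A) preserving E(B) for B ⊆ A, such that ∂_B and the induced ∂_{A\B} are elementary. Then ∂ is conjugate, by an upper-triangular automorphism preserving E(B), to a quasi-elementary differential: one for which additionally (i) for each x ∈ X the vector ∂(x) contains at most one element of P, with coefficient 1 if present, and (ii) each element of P appears in ∂(x) for at most one x ∈ X. -/
open Submodule Module

/-- `E(B)`: the span of the basis vectors indexed by `B`. -/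
noncomputable def ESub (E : Type*) [Field E] {N : ℕ} (B : Set (Fin N)) :
    Submodule E (Fin N → E) :=
  Submodule.span E {v : Fin N → E | ∃ i ∈ B, v = Pi.single i 1}

namespace QEAux

open Matrix


variable {E : Type*} [Field E] {N : ℕ}

/-- upper triangular -/
def UT (A : Matrix (Fin N) (Fin N) E) : Prop := ∀ i j : Fin N, j < i → A i j = 0

/-- identity outside a set -/
def IdOut (S : Set (Fin N)) (A : Matrix (Fin N) (Fin N) E) : Prop :=
  ∀ i j : Fin N, (i ∉ S ∨ j ∉ S) → A i j = if i = j then (1 : E) else 0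

lemma UT.mul {A B : Matrix (Fin N) (Fin N) E} (hA : UT A) (hB : UT B) : UT (A * B) := by
  intro i j hji
  rw [Matrix.mul_apply]
  apply Finset.sum_eq_zero
  intro k _
  rcases lt_or_ge k i with h | h
  · rw [hA i k h, zero_mul]
  · rw [hB k j (lt_of_lt_of_le hji h), mul_zero]

lemma UT.one : UT (1 : Matrix (Fin N) (Fin N) E) := by
  intro i j hji
  rw [Matrix.one_apply_ne (by exact fun h => absurd h.symm (ne_of_lt hji))]

lemma IdOut.mono {S S' : Set (Fin N)} {A : Matrix (Fin N) (Fin N) E} (hSS : S ⊆ S')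
    (hA : IdOut S A) : IdOut S' A := by
  intro i j h
  exact hA i j (by rcases h with h | h; exacts [Or.inl (fun hi => h (hSS hi)), Or.inr (fun hj => h (hSS hj))])

lemma IdOut.mul {S : Set (Fin N)} {A B : Matrix (Fin N) (Fin N) E}
    (hA : IdOut S A) (hB : IdOut S B) : IdOut S (A * B) := by
  intro i j h
  rcases h with h | h
  · have h1 : ∀ k, A i k = if i = k then (1:E) else 0 := fun k => hA i k (Or.inl h)
    rw [Matrix.mul_apply]
    simp only [h1, ite_mul, one_mul, zero_mul]
    rw [Finset.sum_ite_eq]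
    simp [hB i j (Or.inl h)]
  · have h1 : ∀ k, B k j = if k = j then (1:E) else 0 := fun k => hB k j (Or.inr h)
    rw [Matrix.mul_apply]
    simp only [h1, mul_ite, mul_one, mul_zero]
    rw [Finset.sum_ite_eq']
    simp [hA i j (Or.inr h)]

lemma IdOut.one {S : Set (Fin N)} : IdOut S (1 : Matrix (Fin N) (Fin N) E) := by
  intro i j _
  rw [Matrix.one_apply]

lemma mul_apply_elemL (c : Fin N → E) (p : Fin N) (M : Matrix (Fin N) (Fin N) E) (i j : Fin N) :
    ((1 + vecMulVec c (Pi.single p 1)) * M) i j = M i j + c i * M p j := by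
  rw [Matrix.add_mul, Matrix.one_mul, Matrix.add_apply]
  congr 1
  have h1 : ∀ k, vecMulVec c (Pi.single p 1) i k = c i * (if k = p then 1 else 0) :=
    fun k => by rw [vecMulVec_apply, Pi.single_apply]
  rw [Matrix.mul_apply]
  simp only [h1, mul_ite, mul_one, mul_zero, ite_mul, zero_mul]
  rw [Finset.sum_ite_eq']
  simp

lemma mul_apply_elemR (r : Fin N → E) (x₀ : Fin N) (M : Matrix (Fin N) (Fin N) E) (i j : Fin N) :
    (M * (1 + vecMulVec (Pi.single x₀ 1) r)) i j = M i j + M i x₀ * r j := by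
  rw [Matrix.mul_add, Matrix.mul_one, Matrix.add_apply]
  congr 1
  have h1 : ∀ k, vecMulVec (Pi.single x₀ 1) r k j = (if k = x₀ then 1 else 0) * r j :=
    fun k => by rw [vecMulVec_apply, Pi.single_apply]
  rw [Matrix.mul_apply]
  simp only [h1, mul_ite, mul_one, mul_zero, ite_mul, one_mul, zero_mul]
  rw [Finset.sum_ite_eq']
  simp

lemma elem_inv_L (c : Fin N → E) (p : Fin N) (hc : c p = 0) :
    (1 + vecMulVec c (Pi.single p 1)) * (1 + vecMulVec (-c) (Pi.single p 1)) = 1 := by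
  ext i j
  rw [mul_apply_elemL]
  simp only [Matrix.add_apply, vecMulVec_apply, Pi.neg_apply, Pi.single_apply]
  by_cases hjp : j = p
  · subst hjp
    simp [Matrix.one_apply, hc]
  · have : ¬ (p = j) := fun h => hjp h.symm
    simp [Matrix.one_apply, hjp, this]

lemma elem_inv_L' (c : Fin N → E) (p : Fin N) (hc : c p = 0) :
    (1 + vecMulVec (-c) (Pi.single p 1)) * (1 + vecMulVec c (Pi.single p 1)) = 1 := by
  have := elem_inv_L (-c) p (by simp [hc])
  simpa using this

lemma elem_inv_R (r : Fin N → E) (x₀ : Fin N) (hr : r x₀ = 0) :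
    (1 + vecMulVec (Pi.single x₀ 1) r) * (1 + vecMulVec (Pi.single x₀ 1) (-r)) = 1 := by
  ext i j
  rw [mul_apply_elemR]
  simp only [Matrix.add_apply, vecMulVec_apply, Pi.neg_apply, Pi.single_apply]
  by_cases hix : i = x₀
  · subst hix
    by_cases hji : i = j
    · subst hji; simp [Matrix.one_apply, hr]
    · simp [Matrix.one_apply, hji, hr]
  · have : ¬ (x₀ = i) := fun h => hix h.symm
    simp [Matrix.one_apply, hix, this]

lemma elem_inv_R' (r : Fin N → E) (x₀ : Fin N) (hr : r x₀ = 0) :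
    (1 + vecMulVec (Pi.single x₀ 1) (-r)) * (1 + vecMulVec (Pi.single x₀ 1) r) = 1 := by
  have := elem_inv_R (-r) x₀ (by simp [hr])
  simpa using this


def SUT (A : Matrix (Fin N) (Fin N) E) : Prop := ∀ i j : Fin N, j ≤ i → A i j = 0

lemma UT_mul_SUT {A B : Matrix (Fin N) (Fin N) E} (hA : UT A) (hB : SUT B) : SUT (A * B) := by
  intro i j hji
  rw [Matrix.mul_apply]
  apply Finset.sum_eq_zero
  intro k _
  rcases lt_or_ge k i with h | h
  · rw [hA i k h, zero_mul]
  · rw [hB k j (le_trans hji h), mul_zero]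

lemma SUT_mul_UT {A B : Matrix (Fin N) (Fin N) E} (hA : SUT A) (hB : UT B) : SUT (A * B) := by
  intro i j hji
  rw [Matrix.mul_apply]
  apply Finset.sum_eq_zero
  intro k _
  rcases le_or_gt k i with h | h
  · rw [hA i k h, zero_mul]
  · rw [hB k j (lt_of_le_of_lt hji h), mul_zero]

lemma sum_mul_delta (f : Fin N → E) (j : Fin N) :
    (∑ k, f k * (if k = j then 1 else 0)) = f j := by
  simp only [mul_ite, mul_one, mul_zero]
  rw [Finset.sum_ite_eq' Finset.univ j f]
  simp

lemma sum_delta_mul (f : Fin N → E) (i : Fin N) :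
    (∑ k, (if i = k then 1 else 0) * f k) = f i := by
  simp only [ite_mul, one_mul, zero_mul]
  rw [Finset.sum_ite_eq Finset.univ i f]
  simp

lemma colFact {S : Set (Fin N)} {A₁ A₂ : Matrix (Fin N) (Fin N) E} (hA₂ : IdOut S A₂)
    {j : Fin N} (hj : j ∉ S) (i : Fin N) : (A₁ * A₂) i j = A₁ i j := by
  rw [Matrix.mul_apply]
  have h1 : ∀ k, A₂ k j = if k = j then (1:E) else 0 := fun k => hA₂ k j (Or.inr hj)
  simp only [h1]
  exact sum_mul_delta _ j

lemma rowFact {S : Set (Fin N)} {A₁ A₂ : Matrix (Fin N) (Fin N) E} (hA₁ : IdOut S A₁)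
    {i : Fin N} (hi : i ∉ S) (j : Fin N) : (A₁ * A₂) i j = A₂ i j := by
  rw [Matrix.mul_apply]
  have h1 : ∀ k, A₁ i k = if i = k then (1:E) else 0 := fun k => hA₁ i k (Or.inl hi)
  simp only [h1]
  exact sum_delta_mul _ i

lemma cross {S₁ S₂ : Set (Fin N)} {A₁ A₂ : Matrix (Fin N) (Fin N) E}
    (hd : ∀ k, k ∈ S₂ → k ∉ S₁) (hA₁ : IdOut S₁ A₁) (hA₂ : IdOut S₂ A₂)
    {i j : Fin N} (hi : i ∉ S₂) (hj : j ∈ S₂) : (A₁ * A₂) i j = 0 := by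
  rw [Matrix.mul_apply]
  apply Finset.sum_eq_zero
  intro k _
  by_cases hk : k ∈ S₂
  · rw [hA₁ i k (Or.inr (hd k hk))]
    have : i ≠ k := fun h => hi (h ▸ hk)
    simp [this]
  · rw [hA₂ k j (Or.inl hk)]
    have : k ≠ j := fun h => hk (h ▸ hj)
    simp [this]

lemma toLin'_single (A : Matrix (Fin N) (Fin N) E) (i j : Fin N) :
    Matrix.toLin' A (Pi.single j 1) i = A i j := by
  simp [Matrix.toLin'_apply, Matrix.mulVec_single]

lemma mem_ESub' {B : Set (Fin N)} {w : Fin N → E}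
    (hw : ∀ i, i ∉ B → w i = 0) :
    w ∈ Submodule.span E {v : Fin N → E | ∃ i ∈ B, v = Pi.single i 1} := by
  have hw' : w = ∑ i, Pi.single i (w i) := (Finset.univ_sum_single w).symm
  rw [hw']
  apply Submodule.sum_mem
  intro i _
  by_cases hiB : i ∈ B
  · have : Pi.single i (w i) = w i • (Pi.single i 1 : Fin N → E) := by
      rw [← Pi.single_smul, smul_eq_mul, mul_one]
    rw [this]
    exact Submodule.smul_mem _ _ (Submodule.subset_span ⟨i, hiB, rfl⟩)
  · rw [hw i hiB, Pi.single_zero]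
    exact Submodule.zero_mem _


lemma bruhat (n : ℕ) : ∀ (Xf : Finset (Fin N)) (M : Matrix (Fin N) (Fin N) E),
    Xf.card ≤ n → (∀ i j, j ∉ Xf → M i j = 0) →
    ∃ U₁ V₁ U₂ V₂ Pi0 : Matrix (Fin N) (Fin N) E,
      U₁ * V₁ = 1 ∧ V₁ * U₁ = 1 ∧ U₂ * V₂ = 1 ∧ V₂ * U₂ = 1 ∧
      UT U₁ ∧ UT V₁ ∧ UT U₂ ∧ UT V₂ ∧
      IdOut {i | ∃ k, M i k ≠ 0} U₁ ∧ IdOut {i | ∃ k, M i k ≠ 0} V₁ ∧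
      IdOut (↑Xf) U₂ ∧ IdOut (↑Xf) V₂ ∧
      (∀ i j, Pi0 i j = 0 ∨ Pi0 i j = 1) ∧
      (∀ i j j', Pi0 i j ≠ 0 → Pi0 i j' ≠ 0 → j = j') ∧
      (∀ i i' j, Pi0 i j ≠ 0 → Pi0 i' j ≠ 0 → i = i') ∧
      (∀ i j, Pi0 i j ≠ 0 → (∃ k, M i k ≠ 0) ∧ j ∈ Xf) ∧
      M = U₁ * Pi0 * U₂ := by
  induction n with
  | zero =>
    intro Xf M hcard hcol
    have hM : M = 0 := by
      ext i j
      exact hcol i j (by simp [Finset.card_eq_zero.mp (Nat.le_zero.mp hcard)])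
    refine ⟨1, 1, 1, 1, 0, by simp, by simp, by simp, by simp,
      UT.one, UT.one, UT.one, UT.one, IdOut.one, IdOut.one, IdOut.one, IdOut.one,
      fun i j => Or.inl rfl, fun i j j' h => absurd rfl h, fun i i' j h => absurd rfl h,
      fun i j h => absurd rfl h, by simp [hM]⟩
  | succ n ih =>
    intro Xf M hcard hcol
    classical
    by_cases hXf : Xf = ∅
    · have hM : M = 0 := by
        ext i j
        exact hcol i j (by simp [hXf])
      refine ⟨1, 1, 1, 1, 0, by simp, by simp, by simp, by simp,
        UT.one, UT.one, UT.one, UT.one, IdOut.one, IdOut.one, IdOut.one, IdOut.one,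
        fun i j => Or.inl rfl, fun i j j' h => absurd rfl h, fun i i' j h => absurd rfl h,
        fun i j h => absurd rfl h, by simp [hM]⟩
    have hne : Xf.Nonempty := Finset.nonempty_iff_ne_empty.2 hXf
    set x₀ := Xf.min' hne with hx₀def
    have hx₀mem : x₀ ∈ Xf := Xf.min'_mem hne
    have hx₀min : ∀ j ∈ Xf, x₀ ≤ j := fun j hj => Xf.min'_le j hj
    have hcard' : (Xf.erase x₀).card ≤ n := by
      rw [Finset.card_erase_of_mem hx₀mem]; omega
    have herase_sub : ((Xf.erase x₀ : Finset (Fin N)) : Set (Fin N)) ⊆ (↑Xf : Set (Fin N)) :=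
      Finset.coe_subset.mpr (Finset.erase_subset _ _)
    by_cases hv : ∀ i, M i x₀ = 0
    · -- minimum column is zero: recurse directly
      obtain ⟨U₁, V₁, U₂, V₂, Pi0, h1, h2, h3, h4, h5, h6, h7, h8, h9, h10, h11, h12,
        h13, h14, h15, h16, h17⟩ :=
        ih (Xf.erase x₀) M hcard' (by
          intro i j hj
          by_cases hjx : j = x₀
          · subst hjx; exact hv i
          · exact hcol i j (fun hjXf => hj (Finset.mem_erase.2 ⟨hjx, hjXf⟩)))
      exact ⟨U₁, V₁, U₂, V₂, Pi0, h1, h2, h3, h4, h5, h6, h7, h8, h9, h10,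
        IdOut.mono herase_sub h11, IdOut.mono herase_sub h12, h13, h14, h15,
        fun i j h => ⟨(h16 i j h).1, Finset.mem_of_mem_erase (h16 i j h).2⟩, h17⟩
    · push_neg at hv
      set v : Fin N → E := fun i => M i x₀ with hvdef
      have hvex : ∃ i, v i ≠ 0 := hv
      set Psupp : Finset (Fin N) := Finset.univ.filter (fun i => v i ≠ 0) with hPsupp
      have hPsuppne : Psupp.Nonempty := by
        obtain ⟨i, hi⟩ := hvex
        exact ⟨i, by simp [hPsupp, hi]⟩
      set p := Psupp.max' hPsuppne with hpdef
      have hvp : v p ≠ 0 := by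
        have := Psupp.max'_mem hPsuppne
        simpa [hPsupp] using this
      have hpmax : ∀ i, v i ≠ 0 → i ≤ p := fun i hi =>
        Psupp.le_max' i (by simp [hPsupp, hi])
      set c : Fin N → E := fun i => if i = p then 0 else v i / v p with hcdef
      have hcp : c p = 0 := by simp [hcdef]
      set T : Matrix (Fin N) (Fin N) E := 1 + vecMulVec c (Pi.single p 1) with hTdef
      set T' : Matrix (Fin N) (Fin N) E := 1 + vecMulVec (-c) (Pi.single p 1) with hT'def
      have hTT' : T * T' = 1 := elem_inv_L c p hcp
      have hT'T : T' * T = 1 := elem_inv_L' c p hcp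
      set M₁ : Matrix (Fin N) (Fin N) E := T' * M with hM₁def
      have hM₁ : ∀ i j, M₁ i j = M i j - c i * M p j := by
        intro i j
        rw [hM₁def, hT'def, mul_apply_elemL]
        simp [sub_eq_add_neg]
      have hM₁x₀ : ∀ i, i ≠ p → M₁ i x₀ = 0 := by
        intro i hip
        rw [hM₁ i x₀]
        simp only [hcdef, if_neg hip]
        rw [div_mul_cancel₀ _ hvp]
        simp [hvdef]
      have hM₁px₀ : M₁ p x₀ = v p := by
        rw [hM₁ p x₀, hcp]; simp [hvdef]
      have hM₁col : ∀ i j, j ∉ Xf → M₁ i j = 0 := by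
        intro i j hj
        rw [hM₁ i j, hcol i j hj, hcol p j hj]
        ring
      set r : Fin N → E := fun j => if j ∈ Xf ∧ j ≠ x₀ then M₁ p j / v p else 0 with hrdef
      have hrx₀ : r x₀ = 0 := by simp [hrdef]
      set C : Matrix (Fin N) (Fin N) E := 1 + vecMulVec (Pi.single x₀ 1) r with hCdef
      set C' : Matrix (Fin N) (Fin N) E := 1 + vecMulVec (Pi.single x₀ 1) (-r) with hC'def
      have hCC' : C * C' = 1 := elem_inv_R r x₀ hrx₀
      have hC'C : C' * C = 1 := elem_inv_R' r x₀ hrx₀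
      set M₂ : Matrix (Fin N) (Fin N) E := M₁ * C' with hM₂def
      have hM₂ : ∀ i j, M₂ i j = M₁ i j - M₁ i x₀ * r j := by
        intro i j
        rw [hM₂def, hC'def, mul_apply_elemR]
        simp [sub_eq_add_neg]
      have hM₂x₀ : ∀ i, M₂ i x₀ = M₁ i x₀ := by
        intro i; rw [hM₂ i x₀, hrx₀]; ring
      have hM₂p : ∀ j, j ≠ x₀ → M₂ p j = 0 := by
        intro j hj
        rw [hM₂ p j, hM₁px₀]
        by_cases hjXf : j ∈ Xf
        · have hrj : r j = M₁ p j / v p := by simp [hrdef, hjXf, hj]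
          rw [hrj, mul_comm, div_mul_cancel₀ _ hvp, sub_self]
        · have hrj : r j = 0 := by simp [hrdef, hjXf]
          rw [hrj, hM₁col p j hjXf, mul_zero, sub_zero]
      have hM₂col : ∀ i j, j ∉ Xf → M₂ i j = 0 := by
        intro i j hj
        rw [hM₂ i j, hM₁col i j hj]
        simp [hrdef, hj]
      have hzrow : ∀ i, (∀ k, M i k = 0) → ∀ k, M₂ i k = 0 := by
        intro i hi k
        have hci : c i = 0 := by
          simp only [hcdef]
          by_cases hip : i = p
          · simp [hip]
          · simp [hip, hvdef, hi x₀]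
        have h1 : ∀ k, M₁ i k = 0 := fun k => by rw [hM₁ i k, hi k, hci]; ring
        rw [hM₂ i k, h1 k, h1 x₀]; ring
      set N' : Matrix (Fin N) (Fin N) E := Matrix.of (fun i j => if j = x₀ then 0 else M₂ i j)
        with hN'def
      have hN'app : ∀ i j, N' i j = if j = x₀ then 0 else M₂ i j := fun i j => rfl
      have hN'col : ∀ i j, j ∉ Xf.erase x₀ → N' i j = 0 := by
        intro i j hj
        rw [hN'app]
        by_cases hjx : j = x₀
        · simp [hjx]
        · rw [if_neg hjx]
          exact hM₂col i j (fun h => hj (Finset.mem_erase.2 ⟨hjx, h⟩))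
      have hN'rowsub : {i | ∃ k, N' i k ≠ 0} ⊆ {i | ∃ k, M i k ≠ 0} := by
        intro i hi
        by_contra hM0
        simp only [Set.mem_setOf_eq, not_exists, not_not] at hM0 ⊢
        obtain ⟨k, hk⟩ := hi
        apply hk
        rw [hN'app]
        by_cases hkx : k = x₀
        · simp [hkx]
        · rw [if_neg hkx]; exact hzrow i hM0 k
      have hN'rowp : ∀ k, N' p k = 0 := by
        intro k
        rw [hN'app]
        by_cases hkx : k = x₀
        · simp [hkx]
        · rw [if_neg hkx]; exact hM₂p k hkx
      obtain ⟨U₁', V₁', U₂', V₂', Pi', i1, i2, i3, i4, u1, u2, u3, u4, o1, o2, o3, o4,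
        p1, p2, p3, p4, heq⟩ := ih (Xf.erase x₀) N' hcard' hN'col
      -- facts about the recursive pieces at p and x₀
      have hpsuppM : p ∈ {i | ∃ k, M i k ≠ 0} := ⟨x₀, hvp⟩
      have hpnotin : p ∉ {i | ∃ k, N' i k ≠ 0} := by
        rintro ⟨k, hk⟩
        exact hk (hN'rowp k)
      have hx₀notin : x₀ ∉ ((Xf.erase x₀ : Finset (Fin N)) : Set (Fin N)) := by simp
      have hU₁'colp : ∀ i, U₁' i p = if i = p then 1 else 0 := fun i => o1 i p (Or.inr hpnotin)
      have hU₂'rowx₀ : ∀ j, U₂' x₀ j = if x₀ = j then 1 else 0 := fun j =>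
        o3 x₀ j (Or.inl hx₀notin)
      have hPi'p : ∀ j, Pi' p j = 0 := by
        intro j
        by_contra h
        exact hpnotin (p4 p j h).1
      have hPi'x₀ : ∀ i, Pi' i x₀ = 0 := by
        intro i
        by_contra h
        exact hx₀notin (p4 i x₀ h).2
      -- new pieces
      set Epx : Matrix (Fin N) (Fin N) E :=
        Matrix.of (fun i j => if i = p ∧ j = x₀ then (1 : E) else 0) with hEpxdef
      set Epv : Matrix (Fin N) (Fin N) E :=
        Matrix.of (fun i j => if i = p ∧ j = x₀ then v p else 0) with hEpvdef
      set Dsc : Matrix (Fin N) (Fin N) E :=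
        Matrix.diagonal (fun j => if j = x₀ then v p else 1) with hDscdef
      set Dsc' : Matrix (Fin N) (Fin N) E :=
        Matrix.diagonal (fun j => if j = x₀ then (v p)⁻¹ else 1) with hDsc'def
      have hDD' : Dsc * Dsc' = 1 := by
        rw [hDscdef, hDsc'def, Matrix.diagonal_mul_diagonal]
        ext i j
        by_cases hij : i = j
        · subst hij
          rw [Matrix.diagonal_apply_eq, Matrix.one_apply_eq]
          by_cases hix : i = x₀ <;> simp [hix, mul_inv_cancel₀ hvp]
        · rw [Matrix.diagonal_apply_ne _ hij, Matrix.one_apply_ne hij]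
      have hD'D : Dsc' * Dsc = 1 := by
        rw [hDscdef, hDsc'def, Matrix.diagonal_mul_diagonal]
        ext i j
        by_cases hij : i = j
        · subst hij
          rw [Matrix.diagonal_apply_eq, Matrix.one_apply_eq]
          by_cases hix : i = x₀ <;> simp [hix, inv_mul_cancel₀ hvp]
        · rw [Matrix.diagonal_apply_ne _ hij, Matrix.one_apply_ne hij]
      set Pi0 : Matrix (Fin N) (Fin N) E := Pi' + Epx with hPi0def
      set U₁ : Matrix (Fin N) (Fin N) E := T * U₁' with hU₁def
      set V₁ : Matrix (Fin N) (Fin N) E := V₁' * T' with hV₁def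
      set U₂ : Matrix (Fin N) (Fin N) E := Dsc * U₂' * C with hU₂def
      set V₂ : Matrix (Fin N) (Fin N) E := C' * (V₂' * Dsc') with hV₂def
      -- inverses
      have hUV₁ : U₁ * V₁ = 1 := by
        rw [hU₁def, hV₁def, Matrix.mul_assoc T U₁' (V₁' * T'), ← Matrix.mul_assoc U₁' V₁' T',
          i1, Matrix.one_mul, hTT']
      have hVU₁ : V₁ * U₁ = 1 := by
        rw [hU₁def, hV₁def, Matrix.mul_assoc V₁' T' (T * U₁'), ← Matrix.mul_assoc T' T U₁',
          hT'T, Matrix.one_mul, i2]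
      have hUV₂ : U₂ * V₂ = 1 := by
        rw [hU₂def, hV₂def]
        rw [Matrix.mul_assoc (Dsc * U₂') C (C' * (V₂' * Dsc')), ← Matrix.mul_assoc C C' _,
          hCC', Matrix.one_mul, Matrix.mul_assoc Dsc U₂' (V₂' * Dsc'),
          ← Matrix.mul_assoc U₂' V₂' Dsc', i3, Matrix.one_mul, hDD']
      have hVU₂ : V₂ * U₂ = 1 := by
        rw [hU₂def, hV₂def]
        rw [Matrix.mul_assoc C' (V₂' * Dsc') (Dsc * U₂' * C), Matrix.mul_assoc Dsc U₂' C,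
          Matrix.mul_assoc V₂' Dsc' _, ← Matrix.mul_assoc Dsc' Dsc _, hD'D, Matrix.one_mul,
          ← Matrix.mul_assoc V₂' U₂' C, i4, Matrix.one_mul, hC'C]
      -- triangularity
      have hchigh : ∀ i, p < i → c i = 0 := by
        intro i hi
        have hvi : v i = 0 := by
          by_contra h
          exact absurd (hpmax i h) (not_le.2 hi)
        simp [hcdef, hvi, (ne_of_gt hi : i ≠ p)]
      have hUTL : ∀ c' : Fin N → E, (∀ i, p < i → c' i = 0) →
          UT (1 + vecMulVec c' (Pi.single p 1)) := by
        intro c' hc' i j hji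
        simp only [Matrix.add_apply, vecMulVec_apply, Pi.single_apply]
        rw [Matrix.one_apply_ne (ne_of_gt hji)]
        by_cases hjp : j = p
        · subst hjp
          rw [hc' i hji]
          simp
        · simp [hjp]
      have hrlow : ∀ j, j < x₀ → r j = 0 := by
        intro j hj
        have : ¬(j ∈ Xf ∧ j ≠ x₀) := by
          rintro ⟨hjXf, -⟩
          exact absurd (hx₀min j hjXf) (not_le.2 hj)
        simp [hrdef, this]
      have hUTR : ∀ r' : Fin N → E, (∀ j, j < x₀ → r' j = 0) →
          UT (1 + vecMulVec (Pi.single x₀ 1) r') := by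
        intro r' hr' i j hji
        simp only [Matrix.add_apply, vecMulVec_apply, Pi.single_apply]
        rw [Matrix.one_apply_ne (ne_of_gt hji)]
        by_cases hix : i = x₀
        · subst hix
          rw [hr' j hji]
          simp
        · simp [hix]
      have hUTT : UT T := hUTL c hchigh
      have hUTT' : UT T' := by
        rw [hT'def]
        exact hUTL (-c) (fun i hi => by simp [hchigh i hi])
      have hUTC : UT C := hUTR r hrlow
      have hUTC' : UT C' := by
        rw [hC'def]
        exact hUTR (-r) (fun j hj => by simp [hrlow j hj])
      have hUTD : UT Dsc := by
        intro i j hji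
        rw [hDscdef]
        exact Matrix.diagonal_apply_ne _ (ne_of_gt hji)
      have hUTD' : UT Dsc' := by
        intro i j hji
        rw [hDsc'def]
        exact Matrix.diagonal_apply_ne _ (ne_of_gt hji)
      -- IdOut
      have hc0 : ∀ i, (∀ k, M i k = 0) → c i = 0 := by
        intro i hi
        by_cases hip : i = p
        · simp [hcdef, hip]
        · simp [hcdef, hip, hvdef, hi x₀]
      have hIdL : ∀ c' : Fin N → E, (∀ i, (∀ k, M i k = 0) → c' i = 0) →
          IdOut {i | ∃ k, M i k ≠ 0} (1 + vecMulVec c' (Pi.single p 1)) := by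
        intro c' hc' i j h
        simp only [Matrix.add_apply, vecMulVec_apply, Pi.single_apply, Matrix.one_apply]
        rcases h with h | h
        · simp only [Set.mem_setOf_eq, not_exists, not_not] at h
          rw [hc' i h]
          simp
        · have hjp : j ≠ p := by
            rintro rfl
            exact h hpsuppM
          simp [hjp]
      have hIdT : IdOut {i | ∃ k, M i k ≠ 0} T := hIdL c hc0
      have hIdT' : IdOut {i | ∃ k, M i k ≠ 0} T' := by
        rw [hT'def]
        exact hIdL (-c) (fun i hi => by simp [hc0 i hi])
      have hr0 : ∀ j, j ∉ Xf → r j = 0 := fun j hj => by simp [hrdef, hj]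
      have hIdR : ∀ r' : Fin N → E, (∀ j, j ∉ Xf → r' j = 0) →
          IdOut (↑Xf) (1 + vecMulVec (Pi.single x₀ 1) r') := by
        intro r' hr' i j h
        simp only [Matrix.add_apply, vecMulVec_apply, Pi.single_apply, Matrix.one_apply]
        rcases h with h | h
        · have hix : i ≠ x₀ := by
            rintro rfl
            exact h (by simpa using hx₀mem)
          simp [hix]
        · rw [hr' j (by simpa using h)]
          simp
      have hIdC : IdOut (↑Xf) C := hIdR r hr0
      have hIdC' : IdOut (↑Xf) C' := by
        rw [hC'def]
        exact hIdR (-r) (fun j hj => by simp [hr0 j hj])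
      have hIdD : ∀ w : E, IdOut (↑Xf : Set (Fin N))
          (Matrix.diagonal (fun j => if j = x₀ then w else 1)) := by
        intro w i j h
        by_cases hij : i = j
        · subst hij
          have hix : i ≠ x₀ := by
            rintro rfl
            rcases h with h | h <;> exact h (by simpa using hx₀mem)
          simp [Matrix.diagonal_apply_eq, hix]
        · simp [Matrix.diagonal_apply_ne _ hij, hij]
      have hIdU₁' : IdOut {i | ∃ k, M i k ≠ 0} U₁' := IdOut.mono hN'rowsub o1
      have hIdV₁' : IdOut {i | ∃ k, M i k ≠ 0} V₁' := IdOut.mono hN'rowsub o2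
      have hIdU₂' : IdOut (↑Xf) U₂' := IdOut.mono herase_sub o3
      have hIdV₂' : IdOut (↑Xf) V₂' := IdOut.mono herase_sub o4
      -- the Pi0 properties
      have hEpxapp : ∀ i j, Epx i j = if i = p ∧ j = x₀ then (1 : E) else 0 := fun i j => rfl
      have hPi0app : ∀ i j, Pi0 i j = Pi' i j + (if i = p ∧ j = x₀ then (1 : E) else 0) :=
        fun i j => by rw [hPi0def, Matrix.add_apply, hEpxapp]
      have q1 : ∀ i j, Pi0 i j = 0 ∨ Pi0 i j = 1 := by
        intro i j
        rw [hPi0app]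
        by_cases hip : i = p
        · subst hip
          rw [hPi'p j, zero_add]
          by_cases hjx : j = x₀ <;> simp [hjx]
        · simp only [hip, false_and, if_false, add_zero]
          exact p1 i j
      have q2 : ∀ i j j', Pi0 i j ≠ 0 → Pi0 i j' ≠ 0 → j = j' := by
        intro i j j' hj hj'
        rw [hPi0app] at hj hj'
        by_cases hip : i = p
        · subst hip
          rw [hPi'p j, zero_add] at hj
          rw [hPi'p j', zero_add] at hj'
          by_cases hjx : j = x₀
          · by_cases hjx' : j' = x₀
            · rw [hjx, hjx']
            · simp [hjx'] at hj'
          · simp [hjx] at hj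
        · simp only [hip, false_and, if_false, add_zero] at hj hj'
          exact p2 i j j' hj hj'
      have q3 : ∀ i i' j, Pi0 i j ≠ 0 → Pi0 i' j ≠ 0 → i = i' := by
        intro i i' j hi hi'
        rw [hPi0app] at hi hi'
        by_cases hjx : j = x₀
        · subst hjx
          rw [hPi'x₀ i, zero_add] at hi
          rw [hPi'x₀ i', zero_add] at hi'
          by_cases hip : i = p
          · by_cases hip' : i' = p
            · rw [hip, hip']
            · simp [hip'] at hi'
          · simp [hip] at hi
        · simp only [hjx, and_false, if_false, add_zero] at hi hi'
          exact p3 i i' j hi hi'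
      have q4 : ∀ i j, Pi0 i j ≠ 0 → (∃ k, M i k ≠ 0) ∧ j ∈ Xf := by
        intro i j h
        rw [hPi0app] at h
        by_cases hP' : Pi' i j = 0
        · rw [hP', zero_add] at h
          have hij : i = p ∧ j = x₀ := by
            by_contra hc'
            simp [hc'] at h
          exact ⟨⟨x₀, by rw [hij.1]; exact hvp⟩, by rw [hij.2]; exact hx₀mem⟩
        · exact ⟨hN'rowsub (p4 i j hP').1, Finset.mem_of_mem_erase (p4 i j hP').2⟩
      -- the factorization
      have hMfact : M = T * (M₂ * C) := by
        rw [hM₂def, Matrix.mul_assoc M₁ C' C, hC'C, Matrix.mul_one, hM₁def,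
          ← Matrix.mul_assoc T T' M, hTT', Matrix.one_mul]
      have hPi'D : Pi' * Dsc = Pi' := by
        ext i j
        rw [hDscdef, Matrix.mul_diagonal]
        by_cases hjx : j = x₀
        · subst hjx
          rw [hPi'x₀ i]
          simp
        · simp [hjx]
      have hED : Epx * Dsc = Epv := by
        ext i j
        rw [hDscdef, Matrix.mul_diagonal, hEpxapp, hEpvdef]
        by_cases hjx : j = x₀
        · subst hjx
          by_cases hip : i = p <;> simp [hip]
        · simp [hjx]
      have hEpvapp : ∀ i j, Epv i j = if i = p ∧ j = x₀ then v p else 0 := fun i j => rfl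
      have hUE : U₁' * Epv = Epv := by
        ext i j
        rw [Matrix.mul_apply, Finset.sum_eq_single p
          (fun k _ hk => by rw [hEpvapp]; simp [hk])
          (fun h => absurd (Finset.mem_univ p) h)]
        rw [hU₁'colp i, hEpvapp, hEpvapp]
        by_cases hip : i = p <;> by_cases hjx : j = x₀ <;> simp [hip, hjx]
      have hEU : Epv * U₂' = Epv := by
        ext i j
        rw [Matrix.mul_apply, Finset.sum_eq_single x₀
          (fun k _ hk => by rw [hEpvapp]; simp [hk])
          (fun h => absurd (Finset.mem_univ x₀) h)]
        rw [hU₂'rowx₀ j, hEpvapp, hEpvapp]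
        by_cases hip : i = p <;> by_cases hjx : j = x₀ <;> simp [hip, hjx, eq_comm]
      have hM₂eq : M₂ = N' + Epv := by
        ext i j
        rw [Matrix.add_apply, hN'app, hEpvdef]
        by_cases hjx : j = x₀
        · subst hjx
          simp only [if_pos rfl, and_true, zero_add]
          rw [hM₂x₀ i]
          by_cases hip : i = p
          · subst hip
            rw [hM₁px₀]
            simp
          · rw [hM₁x₀ i hip]
            simp [hip]
        · simp [hjx]
      have hkey : M₂ = U₁' * Pi0 * (Dsc * U₂') := by
        rw [hPi0def, Matrix.mul_add U₁' Pi' Epx, Matrix.add_mul]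
        have t1 : U₁' * Pi' * (Dsc * U₂') = N' := by
          rw [Matrix.mul_assoc U₁' Pi' _, ← Matrix.mul_assoc Pi' Dsc U₂', hPi'D,
            ← Matrix.mul_assoc U₁' Pi' U₂', heq]
        have t2 : U₁' * Epx * (Dsc * U₂') = Epv := by
          rw [Matrix.mul_assoc U₁' Epx _, ← Matrix.mul_assoc Epx Dsc U₂', hED,
            ← Matrix.mul_assoc U₁' Epv U₂', hUE, hEU]
        rw [t1, t2, hM₂eq]
      have hfinal : M = U₁ * Pi0 * U₂ := by
        rw [hMfact, hkey, hU₁def, hU₂def]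
        simp only [Matrix.mul_assoc]
      exact ⟨U₁, V₁, U₂, V₂, Pi0, hUV₁, hVU₁, hUV₂, hVU₂,
        UT.mul hUTT u1, UT.mul u2 hUTT', UT.mul (UT.mul hUTD u3) hUTC,
        UT.mul hUTC' (UT.mul u4 hUTD'),
        IdOut.mul hIdT hIdU₁', IdOut.mul hIdV₁' hIdT',
        IdOut.mul (IdOut.mul (hIdD (v p)) hIdU₂') hIdC,
        IdOut.mul hIdC' (IdOut.mul hIdV₂' (hIdD (v p)⁻¹)),
        q1, q2, q3, q4, hfinal⟩

end QEAux

open QEAux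

theorem stmt11 {E : Type*} [Field E] {N : ℕ}
    (d : (Fin N → E) →ₗ[E] (Fin N → E)) (B P Q R X Y Z : Set (Fin N))
    (hqe : QESetup d B P Q R X Y Z) :
    ∃ g : (Fin N → E) ≃ₗ[E] (Fin N → E),
      (∀ i j : Fin N, i < j → g (Pi.single i 1) j = 0) ∧
      Submodule.map g.toLinearMap (ESub E B) = ESub E B ∧
      QESetup (g.toLinearMap ∘ₗ d ∘ₗ g.symm.toLinearMap) B P Q R X Y Z ∧
      QEExtra (g.toLinearMap ∘ₗ d ∘ₗ g.symm.toLinearMap) P X := by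
  classical
  obtain ⟨hsq0, hlow0, hBunion, hPQ, hPR, hQR, hCunion, hXY, hXZ, hYZ,
    hBinv0, hP0, hQmap0, hRsurj0, hX0, hYmap0, hZsurj0, hZ0⟩ := hqe
  -- set inclusions
  have hPB : ∀ {a : Fin N}, a ∈ P → a ∈ B := fun {a} ha => by
    rw [hBunion]; exact Or.inl (Or.inl ha)
  have hQB : ∀ {a : Fin N}, a ∈ Q → a ∈ B := fun {a} ha => by
    rw [hBunion]; exact Or.inl (Or.inr ha)
  have hRB : ∀ {a : Fin N}, a ∈ R → a ∈ B := fun {a} ha => by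
    rw [hBunion]; exact Or.inr ha
  have hXB : ∀ {a : Fin N}, a ∈ X → a ∉ B := fun {a} ha =>
    (show a ∈ Bᶜ by rw [hCunion]; exact Or.inl (Or.inl ha))
  have hYB : ∀ {a : Fin N}, a ∈ Y → a ∉ B := fun {a} ha =>
    (show a ∈ Bᶜ by rw [hCunion]; exact Or.inl (Or.inr ha))
  have hZB : ∀ {a : Fin N}, a ∈ Z → a ∉ B := fun {a} ha =>
    (show a ∈ Bᶜ by rw [hCunion]; exact Or.inr ha)
  have hPX : ∀ k, k ∈ X → k ∉ P := fun k hk hp => hXB hk (hPB hp)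
  -- matrix of d
  set D : Matrix (Fin N) (Fin N) E := LinearMap.toMatrix' d with hDdef
  have hd : d = Matrix.toLin' D := (Matrix.toLin'_toMatrix' d).symm
  have hDapp : ∀ i j, D i j = d (Pi.single j 1) i := fun i j => by
    rw [hd, toLin'_single]
  have hsq : D * D = 0 := by
    apply Matrix.toLin'.injective
    rw [Matrix.toLin'_mul, ← hd, hsq0, map_zero]
  have hlowD : SUT D := fun i j h => by rw [hDapp]; exact hlow0 j i h
  have hBinvD : ∀ b, b ∈ B → ∀ i, i ∉ B → D i b = 0 := fun b hb i hi => by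
    rw [hDapp]; exact hBinv0 b hb i hi
  have hPD : ∀ p0, p0 ∈ P → ∀ i, D i p0 = 0 := fun p0 hp i => by
    rw [hDapp, hP0 p0 hp]; rfl
  have hXD : ∀ x, x ∈ X → ∀ i, i ∉ B → D i x = 0 := fun x hx i hi => by
    rw [hDapp]; exact hX0 x hx i hi
  have hZD : ∀ z, z ∈ Z → ∀ i, i ∉ B → D i z = 0 := fun z hz i hi => by
    rw [hDapp]; exact hZ0 z hz i hi
  have hYD : ∀ y, y ∈ Y → ∀ k, k ∈ X → D k y = 0 := by
    intro y hy k hk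
    obtain ⟨z, hz, h⟩ := hYmap0 y hy
    rw [hDapp, h k (hXB hk)]
    exact Pi.single_eq_of_ne (fun h' : k = z => Set.disjoint_left.1 hXZ hk (h' ▸ hz)) 1
  -- the decomposition
  set Xfin : Finset (Fin N) := (Set.toFinite X).toFinset with hXfindef
  have hXfinmem : ∀ j, j ∈ Xfin ↔ j ∈ X := fun j => Set.Finite.mem_toFinset _
  set M : Matrix (Fin N) (Fin N) E :=
    Matrix.of (fun i j => if i ∈ P ∧ j ∈ X then D i j else 0) with hMdef
  have hMapp : ∀ i j, M i j = if i ∈ P ∧ j ∈ X then D i j else 0 := fun i j => rfl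
  have hMcol : ∀ i j, j ∉ Xfin → M i j = 0 := by
    intro i j hj
    rw [hMapp, if_neg (fun hc => hj ((hXfinmem j).2 hc.2))]
  obtain ⟨U₁, V₁, U₂, V₂, Pi0, i1, i2, i3, i4, u1, u2, u3, u4, o1, o2, o3, o4,
    q1, q2, q3, q4, heq⟩ := bruhat Xfin.card Xfin M le_rfl hMcol
  have hMrowP : {i | ∃ k, M i k ≠ 0} ⊆ P := by
    rintro i ⟨k, hk⟩
    by_contra hiP
    exact hk (by rw [hMapp, if_neg (fun hc => hiP hc.1)])
  have hXfinX : (↑Xfin : Set (Fin N)) = X := Set.Finite.coe_toFinset _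
  have o1P : IdOut P U₁ := IdOut.mono hMrowP o1
  have o2P : IdOut P V₁ := IdOut.mono hMrowP o2
  have o3X : IdOut X U₂ := hXfinX ▸ o3
  have o4X : IdOut X V₂ := hXfinX ▸ o4
  set G : Matrix (Fin N) (Fin N) E := V₁ * U₂ with hGdef
  set Gi : Matrix (Fin N) (Fin N) E := V₂ * U₁ with hGidef
  have hGGi : G * Gi = 1 := by
    rw [hGdef, hGidef, Matrix.mul_assoc V₁ U₂ _, ← Matrix.mul_assoc U₂ V₂ U₁, i3,
      Matrix.one_mul, i2]
  have hGiG : Gi * G = 1 := by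
    rw [hGdef, hGidef, Matrix.mul_assoc V₂ U₁ _, ← Matrix.mul_assoc U₁ V₁ U₂, i1,
      Matrix.one_mul, i4]
  have hUTG : UT G := UT.mul u2 u3
  have hUTGi : UT Gi := UT.mul u4 u1
  -- entry facts for G and Gi
  have hGPP : ∀ i k, k ∈ P → G i k = V₁ i k := fun i k hk =>
    hGdef ▸ colFact o3X (fun h => hPX k h hk) i
  have hGiXc : ∀ l x, x ∉ P → Gi l x = V₂ l x := fun l x hx =>
    hGidef ▸ colFact o1P hx l
  have hGP : ∀ i j, j ∈ P → i ∉ P → G i j = 0 := by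
    intro i j hj hi
    rw [hGPP i j hj, o2P i j (Or.inl hi), if_neg (fun h => hi (by rw [h]; exact hj))]
  have hGiP : ∀ i j, j ∈ P → i ∉ P → Gi i j = 0 := by
    intro i j hj hi
    rw [hGidef]
    exact cross (fun k hk hkX => hPX k hkX hk) o4X o1P hi hj
  have hGX : ∀ i j, j ∈ X → i ∉ X → G i j = 0 := by
    intro i j hj hi
    rw [hGdef]
    exact cross (fun k hk => hPX k hk) o2P o3X hi hj
  have hGiX : ∀ i j, j ∈ X → i ∉ X → Gi i j = 0 := by
    intro i j hj hi
    rw [hGiXc i j (hPX j hj), o4X i j (Or.inl hi), if_neg (fun h => hi (by rw [h]; exact hj))]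
  have hGcol_out : ∀ i j, j ∉ P → j ∉ X → G i j = if i = j then (1:E) else 0 := by
    intro i j hjP hjX
    rw [hGdef, colFact o3X hjX i]
    exact o2P i j (Or.inr hjP)
  have hGicol_out : ∀ i j, j ∉ P → j ∉ X → Gi i j = if i = j then (1:E) else 0 := by
    intro i j hjP hjX
    rw [hGidef, colFact o1P hjP i]
    exact o4X i j (Or.inr hjX)
  have hGColB : ∀ b, b ∈ B → ∀ l, l ∉ B → G l b = 0 := by
    intro b hb l hl
    by_cases hbP : b ∈ P
    · exact hGP l b hbP (fun h => hl (hPB h))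
    · rw [hGcol_out l b hbP (fun h => hXB h hb), if_neg (fun h => hl (by rw [h]; exact hb))]
  have hGiColB : ∀ b, b ∈ B → ∀ l, l ∉ B → Gi l b = 0 := by
    intro b hb l hl
    by_cases hbP : b ∈ P
    · exact hGiP l b hbP (fun h => hl (hPB h))
    · rw [hGicol_out l b hbP (fun h => hXB h hb), if_neg (fun h => hl (by rw [h]; exact hb))]
  -- the key summation fact
  have hF2G : ∀ w : Fin N → E, (∀ k, k ∈ X → w k = 0) → ∀ i, i ∉ B →
      (∑ k, G i k * w k) = w i := by
    intro w hw i hi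
    have hiP : i ∉ P := fun h => hi (hPB h)
    rw [Finset.sum_eq_single i]
    · by_cases hiX : i ∈ X
      · rw [hw i hiX, mul_zero]
      · rw [hGcol_out i i hiP hiX, if_pos rfl, one_mul]
    · intro k _ hk
      by_cases hkX : k ∈ X
      · rw [hw k hkX, mul_zero]
      · by_cases hkP : k ∈ P
        · rw [hGP i k hkP hiP, zero_mul]
        · rw [hGcol_out i k hkP hkX, if_neg (fun h => hk h.symm), zero_mul]
    · intro h; exact absurd (Finset.mem_univ i) h
  -- the conjugated differential
  obtain ⟨D2, hD2def⟩ : ∃ D2 : Matrix (Fin N) (Fin N) E, D2 = G * (D * Gi) := ⟨_, rfl⟩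
  have hGiOne : Matrix.toLin' G ∘ₗ Matrix.toLin' Gi = LinearMap.id := by
    rw [← Matrix.toLin'_mul, hGGi, Matrix.toLin'_one]
  have hGOne : Matrix.toLin' Gi ∘ₗ Matrix.toLin' G = LinearMap.id := by
    rw [← Matrix.toLin'_mul, hGiG, Matrix.toLin'_one]
  obtain ⟨gE, hgE⟩ : ∃ gE : (Fin N → E) ≃ₗ[E] (Fin N → E),
      gE = LinearEquiv.ofLinear (Matrix.toLin' G) (Matrix.toLin' Gi) hGiOne hGOne :=
    ⟨_, rfl⟩
  have hgEmap : gE.toLinearMap = Matrix.toLin' G := by rw [hgE]; rfl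
  have hgEsymm : gE.symm.toLinearMap = Matrix.toLin' Gi := by rw [hgE]; rfl
  have hgEapp : ∀ w, gE w = Matrix.toLin' G w := fun w => by rw [← hgEmap]; rfl
  have hcomp : gE.toLinearMap ∘ₗ d ∘ₗ gE.symm.toLinearMap = Matrix.toLin' D2 := by
    rw [hgEmap, hgEsymm, hD2def]
    apply LinearMap.ext
    intro v
    show Matrix.toLin' G (d (Matrix.toLin' Gi v)) = Matrix.toLin' (G * (D * Gi)) v
    rw [hd]
    simp only [Matrix.toLin'_apply, Matrix.mulVec_mulVec]
  have happ : ∀ i j, (gE.toLinearMap ∘ₗ d ∘ₗ gE.symm.toLinearMap) (Pi.single j 1) i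
      = D2 i j := fun i j => by rw [hcomp]; exact toLin'_single D2 i j
  have hD2app : ∀ i j, D2 i j = ∑ k, G i k * (D * Gi) k j := fun i j => by
    rw [hD2def]; exact Matrix.mul_apply
  -- columns of D * Gi
  have hDGi_delta : ∀ j, j ∉ P → j ∉ X → ∀ k, (D * Gi) k j = D k j := by
    intro j hjP hjX k
    rw [Matrix.mul_apply]
    have h1 : ∀ l, Gi l j = if l = j then (1:E) else 0 := fun l => hGicol_out l j hjP hjX
    simp only [h1]
    exact sum_mul_delta _ j
  have hDGiColB : ∀ b, b ∈ B → ∀ k, k ∉ B → (D * Gi) k b = 0 := by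
    intro b hb k hk
    rw [Matrix.mul_apply]
    apply Finset.sum_eq_zero
    intro l _
    by_cases hlB : l ∈ B
    · rw [hBinvD l hlB k hk, zero_mul]
    · rw [hGiColB b hb l hlB, mul_zero]
  have hDGiColX : ∀ x, x ∈ X → ∀ k, k ∉ B → (D * Gi) k x = 0 := by
    intro x hx k hk
    rw [Matrix.mul_apply]
    apply Finset.sum_eq_zero
    intro l _
    by_cases hlX : l ∈ X
    · rw [hXD l hlX k hk, zero_mul]
    · rw [hGiX l x hx hlX, mul_zero]
  have hD2Q : ∀ q, q ∈ Q → ∀ i, D2 i q = D i q := by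
    intro q hq i
    have hqP : q ∉ P := Set.disjoint_right.1 hPQ hq
    have hqX : q ∉ X := fun h => hXB h (hQB hq)
    obtain ⟨r', hr', hdq'⟩ := hQmap0 q hq
    have hDq : ∀ k, D k q = (Pi.single r' 1 : Fin N → E) k := fun k => by
      rw [hDapp, hdq']
    have hr'P : r' ∉ P := Set.disjoint_right.1 hPR hr'
    have hr'X : r' ∉ X := fun h => hXB h (hRB hr')
    calc D2 i q = ∑ k, G i k * D k q := by
          rw [hD2app]
          exact Finset.sum_congr rfl fun k _ => by rw [hDGi_delta q hqP hqX k]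
      _ = ∑ k, G i k * (if k = r' then 1 else 0) := by
          exact Finset.sum_congr rfl fun k _ => by rw [hDq k, Pi.single_apply]
      _ = G i r' := sum_mul_delta _ r'
      _ = (if i = r' then 1 else 0) := hGcol_out i r' hr'P hr'X
      _ = (Pi.single r' 1 : Fin N → E) i := (Pi.single_apply r' 1 i).symm
      _ = D i q := (hDq i).symm
  have hfunQ : ∀ q, q ∈ Q → (gE.toLinearMap ∘ₗ d ∘ₗ gE.symm.toLinearMap)
      (Pi.single q 1) = d (Pi.single q 1) := by
    intro q hq
    funext i
    rw [happ i q, hD2Q q hq i, hDapp]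
  have hD2Y : ∀ y, y ∈ Y → ∀ i, i ∉ B → D2 i y = D i y := by
    intro y hy i hiB
    have hyP : y ∉ P := fun h => hYB hy (hPB h)
    have hyX : y ∉ X := Set.disjoint_right.1 hXY hy
    rw [hD2app]
    have h2 : (∑ k, G i k * (D * Gi) k y) = ∑ k, G i k * D k y :=
      Finset.sum_congr rfl fun k _ => by rw [hDGi_delta y hyP hyX k]
    rw [h2]
    exact hF2G (fun k => D k y) (fun k hk => hYD y hy k hk) i hiB
  have hD2PX : ∀ p0, p0 ∈ P → ∀ x, x ∈ X → D2 p0 x = Pi0 p0 x := by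
    intro p0 hp0 x hx
    have hxP : x ∉ P := hPX x hx
    have hMV₂ : ∀ k, k ∈ P → (D * Gi) k x = (M * V₂) k x := by
      intro k hk
      rw [Matrix.mul_apply, Matrix.mul_apply]
      apply Finset.sum_congr rfl
      intro l _
      rw [hGiXc l x hxP]
      by_cases hlX : l ∈ X
      · rw [show M k l = D k l from by rw [hMapp, if_pos ⟨hk, hlX⟩]]
      · rw [o4X l x (Or.inl hlX), if_neg (fun h => hlX (by rw [h]; exact hx)), mul_zero,
          mul_zero]
    have step1 : D2 p0 x = (V₁ * (M * V₂)) p0 x := by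
      rw [hD2app, Matrix.mul_apply]
      apply Finset.sum_congr rfl
      intro k _
      by_cases hkP : k ∈ P
      · rw [hGPP p0 k hkP, hMV₂ k hkP]
      · have hG0 : G p0 k = 0 := by
          by_cases hkX : k ∈ X
          · exact hGX p0 k hkX (fun h => hPX p0 h hp0)
          · rw [hGcol_out p0 k hkP hkX, if_neg (fun h => hkP (by rw [← h]; exact hp0))]
        have hV0 : V₁ p0 k = 0 := by
          rw [o2P p0 k (Or.inr hkP), if_neg (fun h => hkP (by rw [← h]; exact hp0))]
        rw [hG0, hV0, zero_mul, zero_mul]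
    have step2 : V₁ * (M * V₂) = Pi0 := by
      rw [heq]
      calc V₁ * (U₁ * Pi0 * U₂ * V₂) = V₁ * (U₁ * Pi0 * (U₂ * V₂)) := by
            rw [Matrix.mul_assoc (U₁ * Pi0) U₂ V₂]
        _ = V₁ * (U₁ * Pi0) := by rw [i3, Matrix.mul_one]
        _ = (V₁ * U₁) * Pi0 := by rw [← Matrix.mul_assoc V₁ U₁ Pi0]
        _ = Pi0 := by rw [i2, Matrix.one_mul]
    rw [step1, step2]
  refine ⟨gE, ?_, ?_, ?_, ?_⟩
  · -- triangularity
    intro i j hij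
    rw [hgEapp, toLin'_single]
    exact hUTG j i hij
  · -- invariance of E(B)
    apply le_antisymm
    · rw [ESub, Submodule.map_span]
      apply Submodule.span_le.2
      rintro v ⟨w, ⟨b, hb, rfl⟩, rfl⟩
      apply mem_ESub'
      intro i hi
      rw [show gE.toLinearMap (Pi.single b 1) = Matrix.toLin' G (Pi.single b 1) from
        by rw [hgEmap]]
      rw [toLin'_single]
      exact hGColB b hb i hi
    · have hsymm : Submodule.map gE.symm.toLinearMap (ESub E B) ≤ ESub E B := by
        rw [ESub, Submodule.map_span]
        apply Submodule.span_le.2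
        rintro v ⟨w, ⟨b, hb, rfl⟩, rfl⟩
        apply mem_ESub'
        intro i hi
        rw [show gE.symm.toLinearMap (Pi.single b 1) = Matrix.toLin' Gi (Pi.single b 1)
          from by rw [hgEsymm]]
        rw [toLin'_single]
        exact hGiColB b hb i hi
      intro v hv
      exact Submodule.mem_map.2 ⟨gE.symm v, hsymm ⟨v, hv, rfl⟩, gE.apply_symm_apply v⟩
  · -- QESetup
    refine ⟨?_, ?_, hBunion, hPQ, hPR, hQR, hCunion, hXY, hXZ, hYZ, ?_, ?_, ?_, ?_,
      ?_, ?_, ?_, ?_⟩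
    · -- sq
      have hD2sq : D2 * D2 = 0 := by
        have h : D2 * D2 = G * (D * ((Gi * G) * (D * Gi))) := by
          rw [hD2def]; simp only [Matrix.mul_assoc]
        rw [h, hGiG, Matrix.one_mul, ← Matrix.mul_assoc D D Gi, hsq,
          Matrix.zero_mul, Matrix.mul_zero]
      rw [hcomp, ← Matrix.toLin'_mul, hD2sq]
      exact map_zero _
    · -- lower
      intro i j hij
      rw [happ j i]
      have hSUT : SUT D2 := by
        rw [hD2def]
        exact UT_mul_SUT hUTG (SUT_mul_UT hlowD hUTGi)
      exact hSUT j i hij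
    · -- hBinv
      intro b hb i hi
      rw [happ i b, hD2app]
      apply Finset.sum_eq_zero
      intro k _
      by_cases hkB : k ∈ B
      · rw [hGColB k hkB i hi, zero_mul]
      · rw [hDGiColB b hb k hkB, mul_zero]
    · -- hP
      intro p0 hp0
      funext i
      rw [happ i p0, hD2app]
      show (∑ k, G i k * (D * Gi) k p0) = 0
      apply Finset.sum_eq_zero
      intro k _
      have h0 : (D * Gi) k p0 = 0 := by
        rw [Matrix.mul_apply]
        apply Finset.sum_eq_zero
        intro l _
        by_cases hlP : l ∈ P
        · rw [hPD l hlP k, zero_mul]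
        · rw [hGiP l p0 hp0 hlP, mul_zero]
      rw [h0, mul_zero]
    · -- hQmap
      intro q hq
      obtain ⟨r, hrR, hdq⟩ := hQmap0 q hq
      exact ⟨r, hrR, by rw [hfunQ q hq]; exact hdq⟩
    · -- hRsurj
      intro r hr
      obtain ⟨q, ⟨hqQ, hdq⟩, huniq⟩ := hRsurj0 r hr
      exact ⟨q, ⟨hqQ, by rw [hfunQ q hqQ]; exact hdq⟩,
        fun y hy => huniq y ⟨hy.1, by rw [← hfunQ y hy.1]; exact hy.2⟩⟩
    · -- hX
      intro x hx i hiB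
      rw [happ i x, hD2app,
        hF2G (fun k => (D * Gi) k x) (fun k hk => hDGiColX x hx k (hXB hk)) i hiB]
      exact hDGiColX x hx i hiB
    · -- hYmap
      intro y hy
      obtain ⟨z, hz, hzs⟩ := hYmap0 y hy
      refine ⟨z, hz, fun i hiB => ?_⟩
      rw [happ i y, hD2Y y hy i hiB, hDapp]
      exact hzs i hiB
    · -- hZsurj
      intro z hz
      obtain ⟨y, ⟨hyY, hys⟩, huniq⟩ := hZsurj0 z hz
      refine ⟨y, ⟨hyY, fun i hiB => ?_⟩, fun y' hy' => huniq y' ⟨hy'.1, fun i hiB => ?_⟩⟩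
      · rw [happ i y, hD2Y y hyY i hiB, hDapp]
        exact hys i hiB
      · have h := hy'.2 i hiB
        rw [happ i y', hD2Y y' hy'.1 i hiB, hDapp] at h
        exact h
    · -- hZ
      intro z hz i hiB
      have hzP : z ∉ P := fun h => hZB hz (hPB h)
      have hzX : z ∉ X := Set.disjoint_right.1 hXZ hz
      rw [happ i z, hD2app]
      have h2 : (∑ k, G i k * (D * Gi) k z) = ∑ k, G i k * D k z :=
        Finset.sum_congr rfl fun k _ => by rw [hDGi_delta z hzP hzX k]
      rw [h2, hF2G (fun k => D k z) (fun k hk => hZD z hz k (hXB hk)) i hiB]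
      exact hZD z hz i hiB
  · -- QEExtra
    refine ⟨?_, ?_, ?_⟩
    · intro x hx p hp p' hp' h1 h2
      rw [happ p x, hD2PX p hp x hx] at h1
      rw [happ p' x, hD2PX p' hp' x hx] at h2
      exact q3 p p' x h1 h2
    · intro x hx p hp h
      rw [happ p x, hD2PX p hp x hx] at h ⊢
      rcases q1 p x with h0 | h0
      · exact absurd h0 h
      · exact h0
    · intro p hp x hx x' hx' h1 h2
      rw [happ p x, hD2PX p hp x hx] at h1
      rw [happ p x', hD2PX p hp x' hx'] at h2
      exact q2 p x x' h1 h2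
end

section
/- Suppose ∂ and ∂₁ are quasi-elementary M-differentials on E(A) (with subset B ⊆ A and associated partitions P,Q,R and X,Y,Z) that are conjugate by an upper-triangular automorphism preserving E(B). Then for every x ∈ X and p ∈ P: the coefficient of p in ∂(x) is nonzero if and only if the coefficient of p in ∂₁(x) is nonzero. -/
open Submodule Module

section aux
variable {E : Type*} [Field E] {N : ℕ}

lemma decomp (v : Fin N → E) : v = ∑ j, v j • (Pi.single j 1 : Fin N → E) := by
  funext k
  simp [Finset.sum_apply, Pi.single_apply]

lemma apply_eq_sum (d : (Fin N → E) →ₗ[E] (Fin N → E)) (v : Fin N → E) (i : Fin N) :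
    d v i = ∑ j, v j * d (Pi.single j 1) i := by
  conv_lhs => rw [decomp v]
  rw [map_sum]
  simp [Finset.sum_apply]

lemma mem_ESub_of_support {T : Set (Fin N)} {v : Fin N → E}
    (h : ∀ j, v j ≠ 0 → j ∈ T) : v ∈ ESub E T := by
  rw [decomp v]
  refine Submodule.sum_mem _ fun j _ => ?_
  by_cases hj : v j = 0
  · simp [hj]
  · exact Submodule.smul_mem _ _ (Submodule.subset_span ⟨j, h j hj, rfl⟩)

lemma ESub_apply_eq_zero {T : Set (Fin N)} {j : Fin N} (hj : j ∉ T)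
    {v : Fin N → E} (hv : v ∈ ESub E T) : v j = 0 := by
  have hle : ESub E T ≤ LinearMap.ker (LinearMap.proj j : (Fin N → E) →ₗ[E] E) := by
    rw [ESub, Submodule.span_le]
    rintro w ⟨i, hi, rfl⟩
    have : j ≠ i := fun hji => hj (hji ▸ hi)
    simp [LinearMap.mem_ker, Pi.single_eq_of_ne this]
  simpa using hle hv

lemma single_mem_ESub {T : Set (Fin N)} {i : Fin N} (h : i ∈ T) :
    (Pi.single i 1 : Fin N → E) ∈ ESub E T :=
  Submodule.subset_span ⟨i, h, rfl⟩

end aux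

section cols
variable {E : Type*} [Field E] {N : ℕ}
  {d : (Fin N → E) →ₗ[E] (Fin N → E)} {B P Q R X Y Z : Set (Fin N)}
  (hqe : QESetup d B P Q R X Y Z)

include hqe

lemma dd_zero (v : Fin N → E) : d (d v) = 0 := by
  have := LinearMap.congr_fun hqe.sq v
  simpa using this

lemma dR_zero {r : Fin N} (hr : r ∈ R) : d (Pi.single r 1) = 0 := by
  obtain ⟨q, ⟨hqQ, hdq⟩, -⟩ := hqe.hRsurj r hr
  rw [← hdq]
  exact dd_zero hqe _

lemma colB_P {b p : Fin N} (hb : b ∈ B) (hp : p ∈ P) : d (Pi.single b 1) p = 0 := by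
  have hb' : b ∈ P ∪ Q ∪ R := hqe.hBunion ▸ hb
  rcases hb' with (hbP | hbQ) | hbR
  · rw [hqe.hP b hbP]; rfl
  · obtain ⟨r, hr, heq⟩ := hqe.hQmap b hbQ
    rw [heq]
    exact Pi.single_eq_of_ne (fun h => (Set.disjoint_left.mp hqe.hPR hp) (by rw [h]; exact hr)) 1
  · rw [dR_zero hqe hbR]; rfl

lemma X_not_B {x : Fin N} (hx : x ∈ X) : x ∉ B := by
  have : x ∈ Bᶜ := hqe.hCunion.symm ▸ Or.inl (Or.inl hx)
  exact this

lemma Y_not_B {y : Fin N} (hy : y ∈ Y) : y ∉ B := by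
  have : y ∈ Bᶜ := hqe.hCunion.symm ▸ Or.inl (Or.inr hy)
  exact this

lemma Z_not_B {z : Fin N} (hz : z ∈ Z) : z ∉ B := by
  have : z ∈ Bᶜ := hqe.hCunion.symm ▸ Or.inr hz
  exact this

/-- Q-coordinates of d(x) vanish, for x ∈ X. -/
lemma colX_Q {x q : Fin N} (hx : x ∈ X) (hq : q ∈ Q) : d (Pi.single x 1) q = 0 := by
  obtain ⟨r0, hr0, hdq0⟩ := hqe.hQmap q hq
  have h0 : d (d (Pi.single x 1)) r0 = 0 := by rw [dd_zero hqe]; rfl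
  rw [apply_eq_sum] at h0
  rw [Finset.sum_eq_single q] at h0
  · rw [hdq0, Pi.single_eq_same, mul_one] at h0
    exact h0
  · intro b _ hbq
    by_cases hbB : b ∈ B
    · have hb' : b ∈ P ∪ Q ∪ R := hqe.hBunion ▸ hbB
      rcases hb' with (hbP | hbQ) | hbR
      · rw [hqe.hP b hbP]; simp
      · obtain ⟨r', hr', heq'⟩ := hqe.hQmap b hbQ
        rw [heq']
        have hrr : r' ≠ r0 := by
          intro h
          obtain ⟨qq, -, huniq⟩ := hqe.hRsurj r0 hr0
          exact hbq ((huniq b ⟨hbQ, h ▸ heq'⟩).trans (huniq q ⟨hq, hdq0⟩).symm)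
        rw [Pi.single_eq_of_ne (Ne.symm hrr)]
        ring
      · rw [dR_zero hqe hbR]; simp
    · rw [hqe.hX x hx b hbB]; ring
  · simp

/-- d(z) has zero P-coordinates for z ∈ Z. -/
lemma colZ_P {z p : Fin N} (hz : z ∈ Z) (hp : p ∈ P) : d (Pi.single z 1) p = 0 := by
  obtain ⟨y, ⟨hy, hagree⟩, -⟩ := hqe.hZsurj z hz
  set w : Fin N → E := d (Pi.single y 1) - Pi.single z 1 with hw
  have hwB : ∀ j, j ∉ B → w j = 0 := by
    intro j hj
    simp only [hw, Pi.sub_apply]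
    rw [hagree j hj]
    ring
  have hdz : d (Pi.single z 1) p = d (d (Pi.single y 1)) p - d w p := by
    have : (Pi.single z 1 : Fin N → E) = d (Pi.single y 1) - w := by simp [hw]
    rw [this, map_sub]; rfl
  rw [dd_zero hqe] at hdz
  have hdw : d w p = 0 := by
    rw [apply_eq_sum]
    apply Finset.sum_eq_zero
    intro j _
    by_cases hjB : j ∈ B
    · rw [colB_P hqe hjB hp]; ring
    · rw [hwB j hjB]; ring
  rw [hdz, hdw]
  simp

/-- Only X-columns (among non-Y columns) can have a nonzero P-coordinate. -/
lemma col_notXY {j p : Fin N} (hjX : j ∉ X) (hjY : j ∉ Y) (hp : p ∈ P) :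
    d (Pi.single j 1) p = 0 := by
  by_cases hjB : j ∈ B
  · exact colB_P hqe hjB hp
  · have : j ∈ X ∪ Y ∪ Z := hqe.hCunion ▸ (hjB : j ∈ Bᶜ)
    rcases this with (h | h) | h
    · exact absurd h hjX
    · exact absurd h hjY
    · exact colZ_P hqe h hp

end cols

section key
variable {E : Type*} [Field E] {N : ℕ}
  {d : (Fin N → E) →ₗ[E] (Fin N → E)} {B P Q R X Y Z : Set (Fin N)}
  (hqe : QESetup d B P Q R X Y Z) (hextra : QEExtra d P X)

include hqe hextra

/-- If d(x) has nonzero coordinate at p ∈ P, then d(x) - e_p is supported on R. -/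
lemma F4 {x p : Fin N} (hx : x ∈ X) (hp : p ∈ P)
    (hne : d (Pi.single x 1) p ≠ 0) :
    d (Pi.single x 1) - Pi.single p 1 ∈ ESub E R := by
  apply mem_ESub_of_support
  intro j hj
  by_contra hjR
  apply hj
  simp only [Pi.sub_apply]
  by_cases hjp : j = p
  · subst hjp
    rw [hextra.2.1 x hx j hp hne, Pi.single_eq_same]
    ring
  · rw [Pi.single_eq_of_ne hjp]
    by_cases hjB : j ∈ B
    · have hj' : j ∈ P ∪ Q ∪ R := hqe.hBunion ▸ hjB
      rcases hj' with (hjP | hjQ) | hjR'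
      · by_cases h0 : d (Pi.single x 1) j = 0
        · rw [h0]; ring
        · exact absurd (hextra.1 x hx j hjP p hp h0 hne) hjp
      · rw [colX_Q hqe hx hjQ]; ring
      · exact absurd hjR' hjR
    · rw [hqe.hX x hx j hjB]; ring

/-- The key membership characterization. -/
lemma keyLemma {p : Fin N} (hp : p ∈ P) (T : Set (Fin N)) (hTY : ∀ j ∈ T, j ∉ Y) :
    Pi.single p 1 ∈
      Submodule.map d (ESub E T) ⊔ ESub E R ⊔ ESub E {j | j < p} ↔
    ∃ j ∈ T, j ∈ X ∧ d (Pi.single j 1) p ≠ 0 := by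
  constructor
  · intro hmem
    rw [Submodule.mem_sup] at hmem
    obtain ⟨a, ha, w, hw, heq⟩ := hmem
    rw [Submodule.mem_sup] at ha
    obtain ⟨du, hdu, s, hs, rfl⟩ := ha
    obtain ⟨u, hu, rfl⟩ := hdu
    by_contra hno
    push_neg at hno
    have h1 : (Pi.single p 1 : Fin N → E) p = 1 := Pi.single_eq_same p 1
    rw [← heq] at h1
    have hsp : s p = 0 :=
      ESub_apply_eq_zero (Set.disjoint_left.mp hqe.hPR hp) hs
    have hwp : w p = 0 :=
      ESub_apply_eq_zero (by simp : p ∉ {j | j < p}) hw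
    have hdup : d u p = 0 := by
      rw [apply_eq_sum]
      apply Finset.sum_eq_zero
      intro j _
      by_cases hjT : j ∈ T
      · by_cases hjX : j ∈ X
        · rw [hno j hjT hjX]; ring
        · rw [col_notXY hqe hjX (hTY j hjT) hp]; ring
      · rw [ESub_apply_eq_zero hjT hu]; ring
    rw [Pi.add_apply, Pi.add_apply, hdup, hsp, hwp] at h1
    norm_num at h1
  · rintro ⟨j, hjT, hjX, hjp⟩
    have hmem1 : d (Pi.single j 1) ∈
        Submodule.map d (ESub E T) ⊔ ESub E R ⊔ ESub E {j | j < p} :=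
      Submodule.mem_sup_left (Submodule.mem_sup_left (Submodule.mem_map_of_mem (single_mem_ESub hjT)))
    have hmem2 : d (Pi.single j 1) - Pi.single p 1 ∈
        Submodule.map d (ESub E T) ⊔ ESub E R ⊔ ESub E {j | j < p} :=
      Submodule.mem_sup_left (Submodule.mem_sup_right (F4 hqe hextra hjX hp hjp))
    have := Submodule.sub_mem _ hmem1 hmem2
    simpa using this

end key

section char
variable {E : Type*} [Field E] {N : ℕ}
  {d : (Fin N → E) →ₗ[E] (Fin N → E)} {B P Q R X Y Z : Set (Fin N)}
  (hqe : QESetup d B P Q R X Y Z)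

include hqe

/-- d(e_j) is supported on B whenever j ∉ Y. -/
lemma dcol_mem_B {j : Fin N} (hjY : j ∉ Y) : d (Pi.single j 1) ∈ ESub E B := by
  apply mem_ESub_of_support
  intro i hi
  by_contra hiB
  apply hi
  by_cases hjB : j ∈ B
  · exact hqe.hBinv j hjB i hiB
  · have : j ∈ X ∪ Y ∪ Z := hqe.hCunion ▸ (hjB : j ∈ Bᶜ)
    rcases this with (h | h) | h
    · exact hqe.hX j h i hiB
    · exact absurd h hjY
    · exact hqe.hZ j h i hiB

/-- The span over `I \ Y` is exactly `E(I) ∩ d⁻¹(E(B))`. -/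
lemma charLemma (I : Set (Fin N)) :
    ESub E (I \ Y) = ESub E I ⊓ Submodule.comap d (ESub E B) := by
  apply le_antisymm
  · rw [ESub, Submodule.span_le]
    rintro v ⟨i, ⟨hiI, hiY⟩, rfl⟩
    exact ⟨single_mem_ESub hiI, dcol_mem_B hqe hiY⟩
  · rintro v ⟨hvI, hvB⟩
    apply mem_ESub_of_support
    intro j hj
    refine ⟨by_contra fun hjI => hj (ESub_apply_eq_zero hjI hvI), ?_⟩
    intro hjY
    apply hj
    obtain ⟨z, hz, hagree⟩ := hqe.hYmap j hjY
    have hzB : z ∉ B := Z_not_B hqe hz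
    have hdvz : d v z = 0 := ESub_apply_eq_zero hzB hvB
    rw [apply_eq_sum] at hdvz
    rw [Finset.sum_eq_single j] at hdvz
    · rw [hagree z hzB, Pi.single_eq_same, mul_one] at hdvz
      exact hdvz
    · intro k _ hkj
      by_cases hkY : k ∈ Y
      · obtain ⟨z', hz', hagree'⟩ := hqe.hYmap k hkY
        rw [hagree' z hzB]
        have hzz : z' ≠ z := by
          intro h
          subst h
          obtain ⟨y0, -, huniq⟩ := hqe.hZsurj z' hz'
          exact hkj ((huniq k ⟨hkY, hagree'⟩).trans (huniq j ⟨hjY, hagree⟩).symm)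
        rw [Pi.single_eq_of_ne (Ne.symm hzz)]
        ring
      · rw [ESub_apply_eq_zero hzB (dcol_mem_B hqe hkY)]
        ring
    · simp

end char

section pairing
variable {E : Type*} [Field E] {N : ℕ}
  {d : (Fin N → E) →ₗ[E] (Fin N → E)} {B P Q R X Y Z : Set (Fin N)}
  (hqe : QESetup d B P Q R X Y Z) (hextra : QEExtra d P X)

include hqe hextra

/-- Main characterization of the pairing by subspace memberships. -/
lemma pairingChar {x p : Fin N} (hx : x ∈ X) (hp : p ∈ P) :
    d (Pi.single x 1) p ≠ 0 ↔
      (Pi.single p 1 ∈ Submodule.map d (ESub E ({j | j ≤ x} \ Y)) ⊔ ESub E R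
          ⊔ ESub E {j | j < p}
       ∧ Pi.single p 1 ∉ Submodule.map d (ESub E ({j | j < x} \ Y)) ⊔ ESub E R
          ⊔ ESub E {j | j < p}) := by
  have hTY1 : ∀ j ∈ ({j | j ≤ x} \ Y : Set (Fin N)), j ∉ Y := fun j hj => hj.2
  have hTY2 : ∀ j ∈ ({j | j < x} \ Y : Set (Fin N)), j ∉ Y := fun j hj => hj.2
  constructor
  · intro h
    constructor
    · rw [keyLemma hqe hextra hp _ hTY1]
      exact ⟨x, ⟨le_refl x, Set.disjoint_left.mp hqe.hXY hx⟩, hx, h⟩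
    · rw [keyLemma hqe hextra hp _ hTY2]
      rintro ⟨j, ⟨hjlt, -⟩, hjX, hjp⟩
      have := hextra.2.2 p hp x hx j hjX h hjp
      exact absurd hjlt (by rw [← this]; exact lt_irrefl x)
  · rintro ⟨h1, h2⟩
    rw [keyLemma hqe hextra hp _ hTY1] at h1
    obtain ⟨j, ⟨hjle, hjY⟩, hjX, hjp⟩ := h1
    have hjle' : j ≤ x := hjle
    rcases eq_or_lt_of_le hjle' with rfl | hjlt
    · exact hjp
    · exfalso
      apply h2
      rw [keyLemma hqe hextra hp _ hTY2]
      exact ⟨j, ⟨hjlt, hjY⟩, hjX, hjp⟩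

end pairing

section gside
variable {E : Type*} [Field E] {N : ℕ}
  {d d₁ : (Fin N → E) →ₗ[E] (Fin N → E)} {B P Q R X Y Z : Set (Fin N)}
  {g : (Fin N → E) ≃ₗ[E] (Fin N → E)}

lemma mem_map_iff_equiv (e : (Fin N → E) ≃ₗ[E] (Fin N → E))
    (S : Submodule E (Fin N → E)) (v : Fin N → E) :
    e v ∈ Submodule.map e.toLinearMap S ↔ v ∈ S := by
  constructor
  · rintro ⟨u, hu, heq⟩
    have : u = v := e.injective heq
    rwa [← this]
  · exact fun h => ⟨v, h, rfl⟩

/-- g preserves spans over lower sets. -/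
lemma gLow (hgUT : ∀ i j : Fin N, i < j → g (Pi.single i 1) j = 0)
    (I : Set (Fin N)) (hI : ∀ a ∈ I, ∀ b : Fin N, b ≤ a → b ∈ I) :
    Submodule.map g.toLinearMap (ESub E I) = ESub E I := by
  have hle : Submodule.map g.toLinearMap (ESub E I) ≤ ESub E I := by
    rw [ESub, Submodule.map_span, Submodule.span_le]
    rintro w ⟨v, ⟨i, hi, rfl⟩, rfl⟩
    exact mem_ESub_of_support fun j hj =>
      hI i hi j (le_of_not_gt fun hlt => hj (hgUT i j hlt))
  exact Submodule.eq_of_le_of_finrank_le hle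
    (LinearEquiv.finrank_map_eq g (ESub E I)).ge

lemma dB_image (hqe : QESetup d B P Q R X Y Z) :
    Submodule.map d (ESub E B) = ESub E R := by
  apply le_antisymm
  · rw [ESub, Submodule.map_span, Submodule.span_le]
    rintro w ⟨v, ⟨b, hb, rfl⟩, rfl⟩
    rcases hqe.hBunion ▸ hb with (hbP | hbQ) | hbR
    · rw [hqe.hP b hbP]; exact Submodule.zero_mem _
    · obtain ⟨r, hr, heq⟩ := hqe.hQmap b hbQ
      rw [heq]; exact single_mem_ESub hr
    · rw [dR_zero hqe hbR]; exact Submodule.zero_mem _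
  · rw [ESub, Submodule.span_le]
    rintro v ⟨r, hr, rfl⟩
    obtain ⟨q, ⟨hq, hdq⟩, -⟩ := hqe.hRsurj r hr
    have hqB : q ∈ B := hqe.hBunion.symm ▸ Or.inl (Or.inr hq)
    exact ⟨Pi.single q 1, single_mem_ESub hqB, hdq⟩

variable (hqe : QESetup d B P Q R X Y Z) (hqe₁ : QESetup d₁ B P Q R X Y Z)
  (hgUT : ∀ i j : Fin N, i < j → g (Pi.single i 1) j = 0)
  (hgB : Submodule.map g.toLinearMap (ESub E B) = ESub E B)
  (hconj : d₁ = g.toLinearMap ∘ₗ d ∘ₗ g.symm.toLinearMap)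

include hconj

lemma hgd : ∀ v, d₁ (g v) = g (d v) := by
  intro v; rw [hconj]; simp

lemma hcomm1 : d₁ ∘ₗ g.toLinearMap = g.toLinearMap ∘ₗ d :=
  LinearMap.ext (hgd hconj)

include hqe hqe₁ hgUT hgB

lemma gR : Submodule.map g.toLinearMap (ESub E R) = ESub E R := by
  calc Submodule.map g.toLinearMap (ESub E R)
      = Submodule.map g.toLinearMap (Submodule.map d (ESub E B)) := by
        rw [dB_image hqe]
    _ = Submodule.map (g.toLinearMap ∘ₗ d) (ESub E B) := by
        rw [Submodule.map_comp]
    _ = Submodule.map (d₁ ∘ₗ g.toLinearMap) (ESub E B) := by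
        rw [hcomm1 hconj]
    _ = Submodule.map d₁ (Submodule.map g.toLinearMap (ESub E B)) := by
        rw [Submodule.map_comp]
    _ = Submodule.map d₁ (ESub E B) := by rw [hgB]
    _ = ESub E R := dB_image hqe₁

lemma gComap :
    Submodule.map g.toLinearMap (Submodule.comap d (ESub E B))
      = Submodule.comap d₁ (ESub E B) := by
  ext v
  constructor
  · rintro ⟨u, hu, rfl⟩
    have h1 : d₁ (g u) = g (d u) := hgd hconj u
    have h2 : g (d u) ∈ ESub E B := by
      rw [← hgB]; exact Submodule.mem_map_of_mem hu
    exact Submodule.mem_comap.mpr (h1 ▸ h2)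
  · intro hv
    refine ⟨g.symm v, ?_, by simp⟩
    have h1 : d₁ (g (g.symm v)) = g (d (g.symm v)) := hgd hconj (g.symm v)
    rw [g.apply_symm_apply] at h1
    have hd₁v : d₁ v ∈ ESub E B := hv
    rw [← hgB, h1] at hd₁v
    obtain ⟨w, hw, hweq⟩ := hd₁v
    have hww : w = d (g.symm v) := g.injective hweq
    exact Submodule.mem_comap.mpr (hww ▸ hw)

lemma gT (I : Set (Fin N)) (hI : ∀ a ∈ I, ∀ b : Fin N, b ≤ a → b ∈ I) :
    Submodule.map g.toLinearMap (ESub E (I \ Y)) = ESub E (I \ Y) := by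
  conv_lhs => rw [charLemma hqe I]
  rw [Submodule.map_inf g.toLinearMap g.injective, gLow hgUT I hI,
    gComap hqe hqe₁ hgUT hgB hconj, ← charLemma hqe₁ I]

lemma gW (p : Fin N) (I : Set (Fin N)) (hI : ∀ a ∈ I, ∀ b : Fin N, b ≤ a → b ∈ I) :
    Submodule.map g.toLinearMap
      (Submodule.map d (ESub E (I \ Y)) ⊔ ESub E R ⊔ ESub E {j | j < p})
    = Submodule.map d₁ (ESub E (I \ Y)) ⊔ ESub E R ⊔ ESub E {j | j < p} := by
  rw [Submodule.map_sup, Submodule.map_sup]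
  congr 1
  · congr 1
    · rw [← Submodule.map_comp, ← hcomm1 hconj, Submodule.map_comp,
        gT hqe hqe₁ hgUT hgB hconj I hI]
    · exact gR hqe hqe₁ hgUT hgB hconj
  · exact gLow hgUT {j | j < p} (fun a ha b hb => lt_of_le_of_lt hb ha)

lemma memIff {p : Fin N} (I : Set (Fin N))
    (hI : ∀ a ∈ I, ∀ b : Fin N, b ≤ a → b ∈ I) :
    (Pi.single p 1 ∈
      Submodule.map d (ESub E (I \ Y)) ⊔ ESub E R ⊔ ESub E {j | j < p}) ↔
    (Pi.single p 1 ∈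
      Submodule.map d₁ (ESub E (I \ Y)) ⊔ ESub E R ⊔ ESub E {j | j < p}) := by
  set W := Submodule.map d (ESub E (I \ Y)) ⊔ ESub E R ⊔ ESub E {j | j < p} with hW
  set W₁ := Submodule.map d₁ (ESub E (I \ Y)) ⊔ ESub E R ⊔ ESub E {j | j < p} with hW₁
  have hmap : Submodule.map g.toLinearMap W = W₁ := gW hqe hqe₁ hgUT hgB hconj p I hI
  set c : E := g (Pi.single p 1) p with hc
  have hlowp : ∀ a ∈ {j : Fin N | j < p}, ∀ b : Fin N, b ≤ a → b ∈ {j : Fin N | j < p} :=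
    fun a ha b hb => lt_of_le_of_lt hb ha
  have hcne : c ≠ 0 := by
    intro h0
    have hsupp : g (Pi.single p 1) ∈ ESub E {j | j < p} := by
      apply mem_ESub_of_support
      intro j hj
      rcases lt_trichotomy j p with h | h | h
      · exact h
      · exact absurd (by rw [h]; exact h0) hj
      · exact absurd (hgUT p j h) hj
    rw [← gLow hgUT {j | j < p} hlowp, mem_map_iff_equiv] at hsupp
    have := ESub_apply_eq_zero (by simp : p ∉ {j : Fin N | j < p}) hsupp
    rw [Pi.single_eq_same] at this
    exact one_ne_zero this
  have hv : g (Pi.single p 1) - c • (Pi.single p 1 : Fin N → E) ∈ ESub E {j | j < p} := by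
    apply mem_ESub_of_support
    intro j hj
    rcases lt_trichotomy j p with h | h | h
    · exact h
    · exfalso; apply hj
      rw [h]
      simp only [Pi.sub_apply, Pi.smul_apply, Pi.single_eq_same, smul_eq_mul, mul_one]
      rw [← hc]; ring
    · exfalso; apply hj
      simp only [Pi.sub_apply, Pi.smul_apply, smul_eq_mul]
      rw [hgUT p j h, Pi.single_eq_of_ne (ne_of_gt h)]
      ring
  have hvW₁ : g (Pi.single p 1) - c • (Pi.single p 1 : Fin N → E) ∈ W₁ :=
    Submodule.mem_sup_right hv
  constructor
  · intro h
    have h2 : g (Pi.single p 1) ∈ W₁ := by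
      rw [← hmap]; exact Submodule.mem_map_of_mem h
    have h3 : c • (Pi.single p 1 : Fin N → E) ∈ W₁ := by
      have h4 := Submodule.sub_mem _ h2 hvW₁
      rwa [sub_sub_cancel] at h4
    exact (Submodule.smul_mem_iff _ hcne).mp h3
  · intro h
    have h3 : c • (Pi.single p 1 : Fin N → E) ∈ W₁ := Submodule.smul_mem _ _ h
    have h2 : g (Pi.single p 1) ∈ W₁ := by
      have h4 := Submodule.add_mem _ h3 hvW₁
      have h5 : c • (Pi.single p 1 : Fin N → E) +
          (g (Pi.single p 1) - c • (Pi.single p 1 : Fin N → E)) = g (Pi.single p 1) := by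
        abel
      rwa [h5] at h4
    rw [← hmap, mem_map_iff_equiv] at h2
    exact h2

end gside

theorem stmt17 {E : Type*} [Field E] {N : ℕ}
    (d d₁ : (Fin N → E) →ₗ[E] (Fin N → E)) (B P Q R X Y Z : Set (Fin N))
    (hqe : QESetup d B P Q R X Y Z) (hextra : QEExtra d P X)
    (hqe₁ : QESetup d₁ B P Q R X Y Z) (hextra₁ : QEExtra d₁ P X)
    (g : (Fin N → E) ≃ₗ[E] (Fin N → E))
    (hgUT : ∀ i j : Fin N, i < j → g (Pi.single i 1) j = 0)
    (hgB : Submodule.map g.toLinearMap (ESub E B) = ESub E B)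
    (hconj : d₁ = g.toLinearMap ∘ₗ d ∘ₗ g.symm.toLinearMap) :
    ∀ x ∈ X, ∀ p ∈ P,
      (d (Pi.single x 1) p ≠ 0 ↔ d₁ (Pi.single x 1) p ≠ 0) := by
  intro x hx p hp
  rw [pairingChar hqe hextra hx hp, pairingChar hqe₁ hextra₁ hx hp]
  have hI1 : ∀ a ∈ {j : Fin N | j ≤ x}, ∀ b : Fin N, b ≤ a → b ∈ {j : Fin N | j ≤ x} :=
    fun a ha b hb => le_trans hb ha
  have hI2 : ∀ a ∈ {j : Fin N | j < x}, ∀ b : Fin N, b ≤ a → b ∈ {j : Fin N | j < x} :=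
    fun a ha b hb => lt_of_le_of_lt hb ha
  rw [memIff hqe hqe₁ hgUT hgB hconj _ hI1, memIff hqe hqe₁ hgUT hgB hconj _ hI2]
end

section
/- Any finite chain complex (C_*, ∂) of finite-dimensional vector spaces over a field, equipped with a basis of each C_i and a linear order on the union of bases satisfying the decreasing-order condition (∂ of each basis element is a combination of strictly smaller basis elements), decomposes as a direct sum of complexes of the two types: (i) one-dimensional complexes with zero differential, and (ii) two-dimensional complexes spanned by basis-compatible vectors u, v with ∂(v) = u; moreover the number of summands of type (i) in degree k equals dim H_k(C_*, ∂). -/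
/-!
Process the standard basis vectors `aₙ` in increasing order, keeping a basis `(bᵢ)` in which
`bᵢ` is homogeneous of degree `deg i` with pivot `i` (so the change of basis is upper triangular and
graded), together with a partial matching `σ` of the processed indices: `d bᵢ = b_{σ i}` on matched
sources, `d bᵢ = 0` on the other processed indices.

To process `aₙ`, expand `d aₙ = ∑ cⱼ bⱼ`. As `d (d aₙ) = 0` and the vectors `b_{σ i}` are
independent, `c` vanishes at every source; subtracting `cⱼ bᵢ` from `aₙ` for each target `j = σ i`
gives `v` with `d v = ∑ cⱼ bⱼ` over unmatched cycles `j`. If `d v = 0`, `v` becomes a new cycle;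
otherwise `v` is matched with the pivot `m` of `d v`, and `bₘ` is replaced by `d v`.

In the final basis `d` is elementary. In degree `k`, `ker d` is spanned by the `bᵢ` that are not
sources and `im d` by the targets, which are never sources; whence the count.
-/

open Submodule Module

/-- The graded piece of degree `k`: the span of the basis vectors of degree `k`. -/
noncomputable def degSub (E : Type*) [Field E] {N : ℕ} (deg : Fin N → ℤ) (k : ℤ) :
    Submodule E (Fin N → E) :=
  Submodule.span E {v : Fin N → E | ∃ i : Fin N, deg i = k ∧ v = Pi.single i 1}

section CoordSpan

variable {E ι : Type*} [Field E] [Fintype ι] [DecidableEq ι]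

noncomputable def coordSpan (E : Type*) [Field E] {ι : Type*} [DecidableEq ι] (p : ι → Prop) :
    Submodule E (ι → E) :=
  span E {v | ∃ i, p i ∧ v = Pi.single i 1}

theorem mem_coordSpan {p : ι → Prop} {v : ι → E} :
    v ∈ coordSpan E p ↔ ∀ j, ¬ p j → v j = 0 := by
  constructor
  · intro hv j hj
    induction hv using Submodule.span_induction with
    | mem _ hx =>
      obtain ⟨i, hi, rfl⟩ := hx
      exact Pi.single_eq_of_ne (by rintro rfl; exact hj hi) 1
    | zero => rfl
    | add x y _ _ hx hy => simp [hx, hy]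
    | smul a x _ hx => simp [hx]
  · intro hv
    rw [← Finset.univ_sum_single v]
    refine sum_mem fun i _ => ?_
    by_cases hi : p i
    · rw [← mul_one (v i), ← smul_eq_mul, Pi.single_smul']
      exact smul_mem _ _ (subset_span ⟨i, hi, rfl⟩)
    · simp [hv i hi]

theorem coordSpan_inf (p q : ι → Prop) :
    coordSpan E p ⊓ coordSpan E q = coordSpan E (fun i => p i ∧ q i) := by
  ext v
  simp only [mem_inf, mem_coordSpan, not_and_or]
  exact ⟨fun ⟨hp, hq⟩ j hj => hj.elim (hp j) (hq j),
    fun h => ⟨fun j hj => h j (.inl hj), fun j hj => h j (.inr hj)⟩⟩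

theorem finrank_coordSpan (p : ι → Prop) :
    finrank E (coordSpan E p) = Nat.card {i // p i} := by
  classical
  have hrange : {v : ι → E | ∃ i, p i ∧ v = Pi.single i 1} =
      Set.range fun i : {i // p i} => (Pi.single (i : ι) 1 : ι → E) := by
    ext v
    simp [eq_comm]
  rw [coordSpan, hrange, finrank_span_eq_card, Nat.card_eq_fintype_card]
  exact (Pi.linearIndependent_single_one ι E).comp _ Subtype.val_injective

theorem map_span_eq_self {K V : Type*} [DivisionRing K] [AddCommGroup V] [Module K V]
    [FiniteDimensional K V] (e : V ≃ₗ[K] V) {s : Set V} (h : ∀ x ∈ s, e x ∈ span K s) :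
    (span K s).map (e : V →ₗ[K] V) = span K s := by
  refine eq_of_le_of_finrank_le ?_ (e.finrank_map_eq _).ge
  rw [map_span, span_le]
  rintro _ ⟨x, hx, rfl⟩
  exact h x hx

theorem map_coordSpan_eq_self (e : (ι → E) ≃ₗ[E] (ι → E)) {p : ι → Prop}
    (h : ∀ i, p i → e (Pi.single i 1) ∈ coordSpan E p) :
    (coordSpan E p).map (e : (ι → E) →ₗ[E] (ι → E)) = coordSpan E p :=
  map_span_eq_self e (by rintro _ ⟨i, hi, rfl⟩; exact h i hi)

end CoordSpan

section Conjugation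

variable {K V : Type*} [Field K] [AddCommGroup V] [Module K V] (g : V ≃ₗ[K] V) (d : V →ₗ[K] V)

theorem ker_conj : LinearMap.ker (g.toLinearMap ∘ₗ d ∘ₗ g.symm.toLinearMap) =
    (LinearMap.ker d).map g.toLinearMap := by
  rw [LinearEquiv.ker_comp, LinearMap.ker_comp, comap_equiv_eq_map_symm, LinearEquiv.symm_symm]

theorem range_conj : LinearMap.range (g.toLinearMap ∘ₗ d ∘ₗ g.symm.toLinearMap) =
    (LinearMap.range d).map g.toLinearMap := by
  rw [LinearMap.range_comp, LinearMap.range_comp_of_range_eq_top _ g.symm.range]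

theorem finrank_map_inf {p C : Submodule K V} (hC : C.map g.toLinearMap = C) :
    finrank K ↥(p.map g.toLinearMap ⊓ C) = finrank K ↥(p ⊓ C) := by
  conv_lhs => rw [← hC, ← map_inf _ g.injective]
  exact LinearEquiv.finrank_map_eq g _

end Conjugation

theorem Nat.card_subtype_and_not {α : Type*} [Finite α] {p q : α → Prop} (h : ∀ a, q a → p a) :
    Nat.card {a // p a ∧ ¬ q a} = Nat.card {a // p a} - Nat.card {a // q a} :=
  Set.ncard_sdiff (s := {a | q a}) (t := {a | p a}) h

section Pivot

variable {E : Type*} [Field E] {N : ℕ}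

theorem mem_Vspan_iff {k : ℕ} {v : Fin N → E} : v ∈ Vspan E N k ↔ ∀ j : Fin N, k ≤ j → v j = 0 := by
  change v ∈ coordSpan E (fun j : Fin N => (j : ℕ) < k) ↔ _
  simp only [mem_coordSpan, not_lt]

theorem mem_degSub_iff {deg : Fin N → ℤ} {t : ℤ} {v : Fin N → E} :
    v ∈ degSub E deg t ↔ ∀ j, deg j ≠ t → v j = 0 :=
  mem_coordSpan

theorem Vspan_mono {k l : ℕ} (h : k ≤ l) : Vspan E N k ≤ Vspan E N l :=
  span_mono fun _ ⟨i, hi, hv⟩ => ⟨i, hi.trans_le h, hv⟩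

theorem single_mem_Vspan {k : ℕ} {i : Fin N} (h : (i : ℕ) < k) :
    (Pi.single i 1 : Fin N → E) ∈ Vspan E N k :=
  subset_span ⟨i, h, rfl⟩

theorem single_mem_degSub (deg : Fin N → ℤ) (i : Fin N) :
    (Pi.single i 1 : Fin N → E) ∈ degSub E deg (deg i) :=
  subset_span ⟨i, rfl, rfl⟩

theorem map_degSub_le {deg : Fin N → ℤ} {d : (Fin N → E) →ₗ[E] (Fin N → E)}
    (hgr : ∀ i j : Fin N, d (Pi.single i 1) j ≠ 0 → deg j = deg i - 1) (t : ℤ) :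
    (degSub E deg t).map d ≤ degSub E deg (t - 1) := by
  rw [degSub, map_span, span_le]
  rintro _ ⟨_, ⟨i, rfl, rfl⟩, rfl⟩
  exact mem_degSub_iff.2 fun j hj => by_contra fun h => hj (hgr i j h)

structure HasPivot (deg : Fin N → ℤ) (i : Fin N) (v : Fin N → E) : Prop where
  apply_self_ne_zero : v i ≠ 0
  mem_Vspan : v ∈ Vspan E N (i + 1)
  mem_degSub : v ∈ degSub E deg (deg i)

variable {deg : Fin N → ℤ}

theorem hasPivot_single (i : Fin N) : HasPivot deg i (Pi.single i (1 : E)) :=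
  ⟨by simp, single_mem_Vspan (Nat.lt_succ_self _), single_mem_degSub deg i⟩

namespace HasPivot

variable {i : Fin N} {v : Fin N → E}

theorem apply_eq_zero_of_lt (hv : HasPivot deg i v) {k : Fin N} (hk : i < k) : v k = 0 :=
  mem_Vspan_iff.1 hv.mem_Vspan k hk

theorem smul (hv : HasPivot deg i v) {c : E} (hc : c ≠ 0) : HasPivot deg i (c • v) :=
  ⟨by simpa using ⟨hc, hv.apply_self_ne_zero⟩, smul_mem _ c hv.mem_Vspan,
    smul_mem _ c hv.mem_degSub⟩

theorem add_sum (hv : HasPivot deg i v) {b : Fin N → Fin N → E} (hb : ∀ j, HasPivot deg j (b j))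
    {κ : Type*} {s : Finset κ} {f : κ → Fin N} (hs : ∀ x ∈ s, f x < i ∧ deg (f x) = deg i)
    (c : κ → E) : HasPivot deg i (v + ∑ x ∈ s, c x • b (f x)) := by
  refine ⟨?_, add_mem hv.mem_Vspan (sum_mem fun x hx => smul_mem _ _ ?_),
    add_mem hv.mem_degSub (sum_mem fun x hx => smul_mem _ _ ?_)⟩
  · have : ∑ x ∈ s, c x * b (f x) i = 0 :=
      Finset.sum_eq_zero fun x hx => by rw [(hb _).apply_eq_zero_of_lt (hs x hx).1, mul_zero]
    simpa [Finset.sum_apply, this] using hv.apply_self_ne_zero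
  · exact Vspan_mono (by simpa using (hs x hx).1.le) (hb _).mem_Vspan
  · exact (hs x hx).2 ▸ (hb _).mem_degSub

end HasPivot

theorem isLowerTriangular_of_hasPivot {b : Fin N → Fin N → E} (hb : ∀ i, HasPivot deg i (b i)) :
    Matrix.IsLowerTriangular b :=
  fun _ _ h => (hb _).apply_eq_zero_of_lt h

end Pivot

section TriangularBasis

variable {E ι : Type*} [Field E] [Fintype ι] [LinearOrder ι]

theorem linearIndependent_of_isLowerTriangular {b : Matrix ι ι E} (hb : b.IsLowerTriangular)
    (hdiag : ∀ i, b i i ≠ 0) : LinearIndependent E b := by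
  classical
  refine Matrix.linearIndependent_rows_of_det_ne_zero ?_
  rw [Matrix.det_of_isLowerTriangular b hb]
  exact Finset.prod_ne_zero_iff.2 fun i _ => hdiag i

noncomputable def lowerTriangularBasis (b : Matrix ι ι E) (hb : b.IsLowerTriangular)
    (hdiag : ∀ i, b i i ≠ 0) : Basis ι E (ι → E) :=
  have hli := linearIndependent_of_isLowerTriangular hb hdiag
  Basis.mk hli (hli.span_eq_top_of_card_eq_finrank' (by simp)).ge

@[simp]
theorem coe_lowerTriangularBasis (b : Matrix ι ι E) (hb : b.IsLowerTriangular)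
    (hdiag : ∀ i, b i i ≠ 0) : ⇑(lowerTriangularBasis b hb hdiag) = b := by
  unfold lowerTriangularBasis
  exact Basis.coe_mk _ _

end TriangularBasis

section Matching

variable {E ι : Type*} [Field E] [DecidableEq ι]

def IsMatchingMap (D : (ι → E) →ₗ[E] (ι → E)) (σ : ι → Option ι) : Prop :=
  ∀ i, D (Pi.single i 1) = (σ i).elim 0 (Pi.single · 1)

namespace IsMatchingMap

variable {D : (ι → E) →ₗ[E] (ι → E)} {σ : ι → Option ι}

theorem apply_single_eq_zero_iff (hD : IsMatchingMap D σ) {i : ι} :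
    D (Pi.single i 1) = 0 ↔ σ i = none := by
  rw [hD]
  rcases σ i with _ | j <;> simp

theorem apply_single_eq_single_iff (hD : IsMatchingMap D σ) {i j : ι} :
    D (Pi.single i 1) = Pi.single j 1 ↔ σ i = some j := by
  rw [hD]
  rcases σ i with _ | k
  · exact iff_of_false (fun h => by simpa using congrFun h j) nofun
  · refine ⟨fun h => ?_, fun h => by cases h; rfl⟩
    by_contra hkj
    simpa [Pi.single_apply, Option.some_inj.not.1 hkj] using congrFun h k

variable [Fintype ι]

theorem apply_eq_sum_ite (hD : IsMatchingMap D σ) (v : ι → E) (j : ι) :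
    D v j = ∑ i, if σ i = some j then v i else 0 := by
  conv_lhs => rw [← (Pi.basisFun E ι).sum_repr v]
  simp only [map_sum, map_smul, Pi.basisFun_apply, Pi.basisFun_repr, Finset.sum_apply,
    Pi.smul_apply, smul_eq_mul]
  refine Finset.sum_congr rfl fun i _ => ?_
  rw [hD]
  rcases σ i with _ | k <;> simp [Pi.single_apply, eq_comm]

theorem apply_eq_of_some (hD : IsMatchingMap D σ)
    (hinj : ∀ {i i' j}, σ i = some j → σ i' = some j → i = i') {i j : ι} (hσ : σ i = some j)
    (v : ι → E) : D v j = v i := by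
  rw [apply_eq_sum_ite hD, Finset.sum_eq_single i
    (fun i' _ hi' => if_neg fun h => hi' (hinj h hσ)) (by simp), if_pos hσ]

theorem apply_eq_zero_of_forall_ne (hD : IsMatchingMap D σ) {j : ι} (hj : ∀ i, σ i ≠ some j)
    (v : ι → E) : D v j = 0 := by
  rw [apply_eq_sum_ite hD]
  exact Finset.sum_eq_zero fun i _ => if_neg (hj i)

theorem ker_eq_coordSpan (hD : IsMatchingMap D σ)
    (hinj : ∀ {i i' j}, σ i = some j → σ i' = some j → i = i') :
    LinearMap.ker D = coordSpan E (fun i => σ i = none) := by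
  ext v
  rw [LinearMap.mem_ker, mem_coordSpan]
  constructor
  · intro hv i hi
    obtain ⟨j, hj⟩ := Option.ne_none_iff_exists'.1 hi
    rw [← apply_eq_of_some hD hinj hj v, hv, Pi.zero_apply]
  · intro hv
    ext j
    rw [apply_eq_sum_ite hD]
    exact Finset.sum_eq_zero fun i _ => ite_eq_right_iff.2 fun h => hv i (by simp [h])

theorem range_eq_coordSpan (hD : IsMatchingMap D σ)
    (hinj : ∀ {i i' j}, σ i = some j → σ i' = some j → i = i') :
    LinearMap.range D = coordSpan E (fun j => ∃ i, σ i = some j) := by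
  ext v
  rw [LinearMap.mem_range, mem_coordSpan]
  constructor
  · rintro ⟨u, rfl⟩ j hj
    exact apply_eq_zero_of_forall_ne hD (fun i hi => hj ⟨i, hi⟩) u
  · intro hv
    refine ⟨fun i => (σ i).elim 0 v, funext fun j => ?_⟩
    by_cases hj : ∃ i, σ i = some j
    · obtain ⟨i, hi⟩ := hj
      rw [apply_eq_of_some hD hinj hi, hi]
      rfl
    · rw [apply_eq_zero_of_forall_ne hD (not_exists.1 hj), hv j hj]

theorem isElem {N : ℕ} {D : (Fin N → E) →ₗ[E] (Fin N → E)}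
    {σ : Fin N → Option (Fin N)} (hD : IsMatchingMap D σ)
    (hinj : ∀ {i i' j}, σ i = some j → σ i' = some j → i = i') : IsElem D := by
  refine ⟨fun i => ?_, fun i i' j h₁ h₂ => hinj ((apply_single_eq_single_iff hD).1 h₁)
    ((apply_single_eq_single_iff hD).1 h₂)⟩
  rcases hσ : σ i with _ | j
  · exact .inl ((apply_single_eq_zero_iff hD).2 hσ)
  · exact .inr ⟨j, (apply_single_eq_single_iff hD).2 hσ⟩

end IsMatchingMap

end Matching

section Reduction

variable {E : Type*} [Field E] {N : ℕ} {deg : Fin N → ℤ} {d : (Fin N → E) →ₗ[E] (Fin N → E)}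

structure IsReducedUpTo (deg : Fin N → ℤ) (d : (Fin N → E) →ₗ[E] (Fin N → E)) (n : ℕ)
    (b : Fin N → Fin N → E) (σ : Fin N → Option (Fin N)) : Prop where
  hasPivot : ∀ i, HasPivot deg i (b i)
  source_lt : ∀ {i j}, σ i = some j → (i : ℕ) < n
  target_lt : ∀ {i j}, σ i = some j → j < i
  map_source : ∀ {i j}, σ i = some j → d (b i) = b j
  map_of_none : ∀ {i : Fin N}, (i : ℕ) < n → σ i = none → d (b i) = 0
  inj : ∀ {i i' j}, σ i = some j → σ i' = some j → i = i'

theorem isReducedUpTo_zero :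
    IsReducedUpTo deg d 0 (fun i => Pi.single i 1) (fun _ => none) where
  hasPivot := hasPivot_single
  source_lt := nofun
  target_lt := nofun
  map_source := nofun
  map_of_none := nofun
  inj := nofun

namespace IsReducedUpTo

variable {n : ℕ} {b : Fin N → Fin N → E} {σ : Fin N → Option (Fin N)}

noncomputable def basis (h : IsReducedUpTo deg d n b σ) : Basis (Fin N) E (Fin N → E) :=
  lowerTriangularBasis b (isLowerTriangular_of_hasPivot h.hasPivot)
    fun i => (h.hasPivot i).apply_self_ne_zero

@[simp]
theorem coe_basis (h : IsReducedUpTo deg d n b σ) : ⇑h.basis = b :=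
  coe_lowerTriangularBasis _ _ _

theorem basis_equivFun_apply (h : IsReducedUpTo deg d n b σ) (i : Fin N) :
    h.basis.equivFun (b i) = Pi.single i 1 := by
  have : b i = h.basis.equivFun.symm (Pi.single i 1) := by simp
  rw [this, LinearEquiv.apply_symm_apply]

theorem map_basis_equivFun_eq_self (h : IsReducedUpTo deg d n b σ) {p : Fin N → Prop}
    (hp : ∀ i, p i → b i ∈ coordSpan E p) :
    (coordSpan E p).map h.basis.equivFun.toLinearMap = coordSpan E p :=
  (map_symm_eq_iff _).1 <| map_coordSpan_eq_self _ fun i hi => by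
    simpa only [Basis.equivFun_symm_single, coe_basis, LinearEquiv.coe_coe] using hp i hi

theorem map_basis_equivFun_Vspan (h : IsReducedUpTo deg d n b σ) (k : ℕ) :
    (Vspan E N k).map h.basis.equivFun.toLinearMap = Vspan E N k :=
  h.map_basis_equivFun_eq_self fun i hi =>
    Vspan_mono (Nat.succ_le_of_lt hi) (h.hasPivot i).mem_Vspan

theorem map_basis_equivFun_degSub (h : IsReducedUpTo deg d n b σ) (t : ℤ) :
    (degSub E deg t).map h.basis.equivFun.toLinearMap = degSub E deg t :=
  h.map_basis_equivFun_eq_self fun i hi => hi ▸ (h.hasPivot i).mem_degSub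

theorem target_eq_none (h : IsReducedUpTo deg d n b σ) (hdd : d ∘ₗ d = 0) {i j : Fin N}
    (hσ : σ i = some j) : σ j = none := by
  rcases hσj : σ j with _ | j'
  · rfl
  · have : b j' = 0 := by
      rw [← h.map_source hσj, ← h.map_source hσ, ← LinearMap.comp_apply, hdd, LinearMap.zero_apply]
    exact absurd (congrFun this j') (h.hasPivot j').apply_self_ne_zero

theorem basis_equivFun_eq_zero_of_source (h : IsReducedUpTo deg d n b σ) {u : Fin N → E}
    (hu : u ∈ Vspan E N n) (hdu : d u = 0) {i j : Fin N} (hσ : σ i = some j) :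
    h.basis.equivFun u i = 0 := by
  classical
  set c := h.basis.equivFun u
  have hc : c ∈ Vspan E N n := by
    rw [← h.map_basis_equivFun_Vspan n]
    exact mem_map_of_mem hu
  -- in `d u = ∑ cᵢ' d bᵢ'`, the index `j` is reached from `i` alone
  have hterm : ∀ i', c i' * h.basis.equivFun (d (b i')) j = if i' = i then c i else 0 := by
    intro i'
    split_ifs with hi'
    · rw [hi', h.map_source hσ, h.basis_equivFun_apply, Pi.single_eq_same, mul_one]
    · rcases hσ' : σ i' with _ | j'
      · by_cases hi'n : (i' : ℕ) < n
        · rw [h.map_of_none hi'n hσ', map_zero, Pi.zero_apply, mul_zero]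
        · rw [mem_Vspan_iff.1 hc i' (not_lt.1 hi'n), zero_mul]
      · have hj' : j ≠ j' := fun hj => hi' (h.inj (hj ▸ hσ') hσ)
        rw [h.map_source hσ', h.basis_equivFun_apply, Pi.single_eq_of_ne hj', mul_zero]
  calc c i = ∑ i', c i' * h.basis.equivFun (d (b i')) j := by
        rw [Finset.sum_congr rfl fun i' _ => hterm i', Finset.sum_ite_eq' Finset.univ,
          if_pos (Finset.mem_univ _)]
    _ = h.basis.equivFun (d u) j := by
      conv_rhs => rw [← h.basis.sum_equivFun u]
      simp [c, Finset.sum_apply]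
    _ = 0 := by simp [hdu]

theorem extend_cycle (h : IsReducedUpTo deg d n b σ) (hn : n < N) {v : Fin N → E}
    (hv : HasPivot deg ⟨n, hn⟩ v) (hdv : d v = 0) :
    IsReducedUpTo deg d (n + 1) (Function.update b ⟨n, hn⟩ v) σ := by
  have hne : ∀ {i : Fin N}, (i : ℕ) < n → i ≠ ⟨n, hn⟩ := fun hi => Fin.ne_of_val_ne hi.ne
  refine ⟨(Function.forall_update_iff b (fun i w => HasPivot deg i w)).2
      ⟨hv, fun i _ => h.hasPivot i⟩, fun hσ => Nat.lt_succ_of_lt (h.source_lt hσ), h.target_lt,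
    fun {i j} hσ => ?_, fun {i} hi hσ => ?_, h.inj⟩
  · have hi := h.source_lt hσ
    have hj : (j : ℕ) < n := (Fin.lt_def.1 (h.target_lt hσ)).trans hi
    rw [Function.update_of_ne (hne hi), Function.update_of_ne (hne hj), h.map_source hσ]
  · rcases Nat.lt_succ_iff_lt_or_eq.1 hi with hi | hi
    · rw [Function.update_of_ne (hne hi), h.map_of_none hi hσ]
    · rw [show i = ⟨n, hn⟩ from Fin.ext hi, Function.update_self, hdv]

theorem extend_pair (h : IsReducedUpTo deg d n b σ) (hdd : d ∘ₗ d = 0) (hn : n < N)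
    {v : Fin N → E} (hv : HasPivot deg ⟨n, hn⟩ v) {m : Fin N} (hm : (m : ℕ) < n)
    (hmσ : σ m = none) (hmt : ∀ i, σ i ≠ some m) (hdv : HasPivot deg m (d v)) :
    IsReducedUpTo deg d (n + 1) (Function.update (Function.update b m (d v)) ⟨n, hn⟩ v)
      (Function.update σ ⟨n, hn⟩ (some m)) := by
  set n' : Fin N := ⟨n, hn⟩
  have hne : ∀ {i : Fin N}, (i : ℕ) < n → i ≠ n' := fun hi => Fin.ne_of_val_ne hi.ne
  have hlt : ∀ {i j}, σ i = some j → (i : ℕ) < n ∧ (j : ℕ) < n := fun hσ =>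
    ⟨h.source_lt hσ, (Fin.lt_def.1 (h.target_lt hσ)).trans (h.source_lt hσ)⟩
  have hσ' : ∀ {i j}, Function.update σ n' (some m) i = some j →
      i = n' ∧ j = m ∨ i ≠ n' ∧ σ i = some j := by
    intro i j hij
    by_cases hi : i = n'
    · subst hi
      exact .inl ⟨rfl, (Option.some_injective _ (by simpa using hij)).symm⟩
    · exact .inr ⟨hi, by rwa [Function.update_of_ne hi] at hij⟩
  refine ⟨(Function.forall_update_iff _ (fun i w => HasPivot deg i w)).2 ⟨hv, fun i _ =>
      (Function.forall_update_iff b (fun i w => HasPivot deg i w)).2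
        ⟨hdv, fun i _ => h.hasPivot i⟩ i⟩, fun hσ => ?_, fun hσ => ?_, fun {i j} hσ => ?_,
    fun {i} hi hσ => ?_, fun hσ₁ hσ₂ => ?_⟩
  · rcases hσ' hσ with ⟨rfl, -⟩ | ⟨-, hσ⟩
    · exact Nat.lt_succ_self n
    · exact Nat.lt_succ_of_lt (h.source_lt hσ)
  · rcases hσ' hσ with ⟨rfl, rfl⟩ | ⟨-, hσ⟩
    · exact Fin.lt_def.2 hm
    · exact h.target_lt hσ
  · rcases hσ' hσ with ⟨rfl, rfl⟩ | ⟨hi, hij⟩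
    · rw [Function.update_self, Function.update_of_ne (hne hm), Function.update_self]
    · have him : i ≠ m := by rintro rfl; rw [hmσ] at hij; cases hij
      have hjm : j ≠ m := by rintro rfl; exact hmt i hij
      rw [Function.update_of_ne hi, Function.update_of_ne him,
        Function.update_of_ne (hne (hlt hij).2), Function.update_of_ne hjm, h.map_source hij]
  · have hi' : i ≠ n' := by rintro rfl; simp at hσ
    rw [Function.update_of_ne hi'] at hσ ⊢
    have hin : (i : ℕ) < n := lt_of_le_of_ne (Nat.lt_succ_iff.1 hi) (Fin.val_ne_of_ne hi')
    by_cases him : i = m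
    · rw [him, Function.update_self, ← LinearMap.comp_apply, hdd, LinearMap.zero_apply]
    · rw [Function.update_of_ne him, h.map_of_none hin hσ]
  · rcases hσ' hσ₁ with ⟨rfl, rfl⟩ | ⟨hi, hσ₁⟩ <;> rcases hσ' hσ₂ with ⟨rfl, hj⟩ | ⟨hi', hσ₂⟩
    · rfl
    · exact absurd hσ₂ (hmt _)
    · exact absurd (hj ▸ hσ₁) (hmt _)
    · exact h.inj hσ₁ hσ₂

theorem deg_target (h : IsReducedUpTo deg d n b σ)
    (hgr : ∀ i j : Fin N, d (Pi.single i 1) j ≠ 0 → deg j = deg i - 1) {i j : Fin N}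
    (hσ : σ i = some j) : deg j = deg i - 1 := by
  have hdb := map_degSub_le hgr (deg i) (mem_map_of_mem (h.hasPivot i).mem_degSub)
  rw [h.map_source hσ] at hdb
  by_contra hne
  exact (h.hasPivot j).apply_self_ne_zero (mem_degSub_iff.1 hdb j hne)

theorem exists_succ_of_map_eq_sum (h : IsReducedUpTo deg d n b σ) (hdd : d ∘ₗ d = 0)
    (hn : n < N) {v : Fin N → E} (hv : HasPivot deg ⟨n, hn⟩ v) {s : Finset (Fin N)}
    {c : Fin N → E} (hdv : d v = ∑ j ∈ s, c j • b j)
    (hs : ∀ j ∈ s, c j ≠ 0 ∧ (j : ℕ) < n ∧ σ j = none ∧ (∀ i, σ i ≠ some j) ∧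
      deg j = deg ⟨n, hn⟩ - 1) :
    ∃ b' σ', IsReducedUpTo deg d (n + 1) b' σ' := by
  rcases s.eq_empty_or_nonempty with hs₀ | hs₀
  · exact ⟨_, _, h.extend_cycle hn hv (by rw [hdv, hs₀, Finset.sum_empty])⟩
  set m := s.max' hs₀
  obtain ⟨hcm, hm, hmσ, hmt, hmdeg⟩ := hs m (s.max'_mem hs₀)
  have hdvm : HasPivot deg m (d v) := by
    rw [hdv, ← Finset.add_sum_erase s _ (s.max'_mem hs₀)]
    refine ((h.hasPivot m).smul hcm).add_sum (f := id) h.hasPivot (fun j hj => ⟨?_, ?_⟩) c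
    · exact lt_of_le_of_ne (s.le_max' j (Finset.mem_of_mem_erase hj)) (Finset.ne_of_mem_erase hj)
    · rw [id, (hs j (Finset.mem_of_mem_erase hj)).2.2.2.2, hmdeg]
  exact ⟨_, _, h.extend_pair hdd hn hv hm hmσ hmt hdvm⟩

theorem coeff_map_single (h : IsReducedUpTo deg d n b σ) (hd : IsMDiff d)
    (hgr : ∀ i j : Fin N, d (Pi.single i 1) j ≠ 0 → deg j = deg i - 1) (hn : n < N) {i : Fin N}
    (hi : h.basis.equivFun (d (Pi.single ⟨n, hn⟩ 1)) i ≠ 0) :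
    (i : ℕ) < n ∧ σ i = none ∧ deg i = deg ⟨n, hn⟩ - 1 := by
  have hwV : d (Pi.single ⟨n, hn⟩ 1) ∈ Vspan E N n :=
    hd.2 (n + 1) (mem_map_of_mem (single_mem_Vspan (Nat.lt_succ_self n)))
  have hwD : d (Pi.single ⟨n, hn⟩ 1) ∈ degSub E deg (deg ⟨n, hn⟩ - 1) :=
    map_degSub_le hgr _ (mem_map_of_mem (single_mem_degSub deg _))
  refine ⟨lt_of_not_ge fun hle => hi ?_, Option.eq_none_iff_forall_ne_some.2 fun _ hσ =>
    hi (h.basis_equivFun_eq_zero_of_source hwV ?_ hσ), by_contra fun hne => hi ?_⟩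
  · have := mem_map_of_mem (f := h.basis.equivFun.toLinearMap) hwV
    rw [h.map_basis_equivFun_Vspan] at this
    exact mem_Vspan_iff.1 this i hle
  · rw [← LinearMap.comp_apply, hd.1, LinearMap.zero_apply]
  · have := mem_map_of_mem (f := h.basis.equivFun.toLinearMap) hwD
    rw [h.map_basis_equivFun_degSub] at this
    exact mem_degSub_iff.1 this i hne

theorem exists_succ (h : IsReducedUpTo deg d n b σ) (hd : IsMDiff d)
    (hgr : ∀ i j : Fin N, d (Pi.single i 1) j ≠ 0 → deg j = deg i - 1) (hn : n < N) :
    ∃ b' σ', IsReducedUpTo deg d (n + 1) b' σ' := by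
  classical
  set w := d (Pi.single ⟨n, hn⟩ 1)
  set c := h.basis.equivFun w
  have hw : ∑ i, c i • b i = w := by
    have := h.basis.sum_equivFun w
    rwa [h.coe_basis] at this
  have hc : ∀ {i}, c i ≠ 0 → (i : ℕ) < n ∧ σ i = none ∧ deg i = deg ⟨n, hn⟩ - 1 :=
    h.coeff_map_single hd hgr hn
  set T := Finset.univ.filter fun j => (∃ i, σ i = some j) ∧ c j ≠ 0
  set s := Finset.univ.filter fun j => (¬∃ i, σ i = some j) ∧ c j ≠ 0
  have hsplit : w = ∑ j ∈ T, c j • b j + ∑ j ∈ s, c j • b j := by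
    rw [← hw, Finset.sum_filter, Finset.sum_filter, ← Finset.sum_add_distrib]
    refine Finset.sum_congr rfl fun j _ => ?_
    by_cases hcj : c j = 0 <;> by_cases ht : ∃ i, σ i = some j <;> simp [hcj, ht]
  have : Nonempty (Fin N) := ⟨⟨n, hn⟩⟩
  choose! τ hτ using fun j (hj : j ∈ T) => (Finset.mem_filter.1 hj).2.1
  set v := Pi.single ⟨n, hn⟩ 1 + ∑ j ∈ T, (-c j) • b (τ j)
  have hv : HasPivot deg ⟨n, hn⟩ v := by
    refine (hasPivot_single ⟨n, hn⟩).add_sum h.hasPivot (fun j hj => ⟨h.source_lt (hτ j hj), ?_⟩) _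
    have := h.deg_target hgr (hτ j hj)
    have := (hc (Finset.mem_filter.1 hj).2.2).2.2
    omega
  have hdv : d v = ∑ j ∈ s, c j • b j := by
    rw [map_add, map_sum,
      Finset.sum_congr rfl fun j hj => by rw [map_smul, h.map_source (hτ j hj)]]
    simp only [neg_smul, Finset.sum_neg_distrib]
    change w + _ = _
    rw [hsplit]
    abel
  refine h.exists_succ_of_map_eq_sum hd.1 hn hv hdv fun j hj => ?_
  obtain ⟨hjt, hcj⟩ := (Finset.mem_filter.1 hj).2
  obtain ⟨hjn, hjσ, hjdeg⟩ := hc hcj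
  exact ⟨hcj, hjn, hjσ, fun i hi => hjt ⟨i, hi⟩, hjdeg⟩

theorem isUT (h : IsReducedUpTo deg d N b σ) : IsUT h.basis.equivFun :=
  h.map_basis_equivFun_Vspan

theorem isMatchingMap_conj (h : IsReducedUpTo deg d N b σ) :
    IsMatchingMap (h.basis.equivFun.toLinearMap ∘ₗ d ∘ₗ h.basis.equivFun.symm.toLinearMap) σ := by
  intro i
  rcases hσ : σ i with _ | j
  · simp [h.map_of_none i.isLt hσ]
  · simp [h.map_source hσ, h.basis_equivFun_apply]

end IsReducedUpTo

theorem exists_isReducedUpTo (hd : IsMDiff d)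
    (hgr : ∀ i j : Fin N, d (Pi.single i 1) j ≠ 0 → deg j = deg i - 1) :
    ∃ b σ, IsReducedUpTo deg d N b σ := by
  suffices ∀ n ≤ N, ∃ b σ, IsReducedUpTo deg d n b σ from this N le_rfl
  intro n hn
  induction n with
  | zero => exact ⟨_, _, isReducedUpTo_zero⟩
  | succ n ih =>
    obtain ⟨b, σ, h⟩ := ih (Nat.le_of_succ_le hn)
    exact h.exists_succ hd hgr hn

end Reduction

/-- a bounded chain complex with ordered bases (a graded M-complex, the
grading recorded by `deg` and the differential lowering `deg` by one) can be brought,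
by an upper-triangular (filtration-preserving) change of basis, to elementary form —
i.e. it splits into one-dimensional summands with zero differential and two-dimensional
summands `d v = u` — and the number of one-dimensional summands in degree `k` equals
`dim H_k = dim (ker d ⊓ C_k) - dim (range d ⊓ C_k)`. -/
theorem stmt19 {E : Type*} [Field E] {N : ℕ} (deg : Fin N → ℤ)
    (d : (Fin N → E) →ₗ[E] (Fin N → E)) (hd : IsMDiff d)
    (hgr : ∀ i j : Fin N, d (Pi.single i 1) j ≠ 0 → deg j = deg i - 1) :
    ∃ g : (Fin N → E) ≃ₗ[E] (Fin N → E), ∃ d' : (Fin N → E) →ₗ[E] (Fin N → E),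
      d' = g.toLinearMap ∘ₗ d ∘ₗ g.symm.toLinearMap ∧ IsUT g ∧ IsElem d' ∧
      ∀ k : ℤ,
        Nat.card {i : Fin N // deg i = k ∧ d' (Pi.single i 1) = 0 ∧
            ∀ j : Fin N, d' (Pi.single j 1) ≠ Pi.single i 1} =
          Module.finrank E ↥(LinearMap.ker d ⊓ degSub E deg k) -
            Module.finrank E ↥(LinearMap.range d ⊓ degSub E deg k) := by
  obtain ⟨b, σ, h⟩ := exists_isReducedUpTo hd hgr
  have hD := h.isMatchingMap_conj
  refine ⟨h.basis.equivFun, _, rfl, h.isUT, hD.isElem h.inj, fun k => ?_⟩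
  have hC := h.map_basis_equivFun_degSub k
  rw [← finrank_map_inf _ (p := LinearMap.ker d) hC,
    ← finrank_map_inf _ (p := LinearMap.range d) hC, ← ker_conj, ← range_conj,
    hD.ker_eq_coordSpan h.inj, hD.range_eq_coordSpan h.inj, degSub, ← coordSpan, coordSpan_inf,
    coordSpan_inf, finrank_coordSpan, finrank_coordSpan]
  simp only [ne_eq, hD.apply_single_eq_zero_iff, hD.apply_single_eq_single_iff]
  rw [← Nat.card_subtype_and_not fun i hi => ⟨h.target_eq_none hd.1 hi.1.choose_spec, hi.2⟩]
  exact Nat.card_congr (Equiv.subtypeEquivRight fun i => by simp only [not_and]; tauto)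
end
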